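/- arXiv:2107.13918 — 5 statements merged into one kernel-verified Lean document; each statement's English description precedes it below -/
import Mathlib

section
/- Let φ : (a,∞) → ℝ be a C¹ function and let u be a solution on an interval (−Λ,Λ) of the Cauchy problem u'' = φ'(u)(1 + (u')²), u(0) = h, u'(0) = 0. Then for all x in (−Λ,Λ), the first integral identity 1 + u'(x)² = exp(2(φ(u(x)) − φ(h))) holds. -/
/-!
Along a solution, `d/dx (1 + u'²) = 2 u' u'' = 2 (φ ∘ u)' (1 + u'²)`, so the energy
`(1 + u'²) e^{-2 φ(u)}` has zero derivative and is constant on the interval; its value at `0`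
is `e^{-2 φ(h)}`.
-/

open Set Real

noncomputable def catenaryEnergy (φ u u' : ℝ → ℝ) (x : ℝ) : ℝ :=
  (1 + u' x ^ 2) * exp (-2 * φ (u x))

theorem hasDerivAt_catenaryEnergy {φ φ' u u' : ℝ → ℝ} {x : ℝ}
    (hφ : HasDerivAt φ (φ' (u x)) (u x)) (hu : HasDerivAt u (u' x) x)
    (hu' : HasDerivAt u' (φ' (u x) * (1 + u' x ^ 2)) x) :
    HasDerivAt (catenaryEnergy φ u u') 0 x := by
  have hspeed : HasDerivAt (fun y => 1 + u' y ^ 2)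
      (2 * u' x * (φ' (u x) * (1 + u' x ^ 2))) x := by
    simpa using ((hu'.fun_pow 2).const_add 1)
  have hweight : HasDerivAt (fun y => exp (-2 * φ (u y)))
      (exp (-2 * φ (u x)) * (-2 * (φ' (u x) * u' x))) x :=
    ((hφ.comp x hu).const_mul (-2)).exp
  exact (hspeed.fun_mul hweight).congr_deriv (by ring)

theorem catenaryEnergy_eq_of_isPreconnected {φ φ' u u' : ℝ → ℝ} {s : Set ℝ}
    (hs : IsOpen s) (hs' : IsPreconnected s)
    (hφ : ∀ x ∈ s, HasDerivAt φ (φ' (u x)) (u x)) (hu : ∀ x ∈ s, HasDerivAt u (u' x) x)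
    (hu' : ∀ x ∈ s, HasDerivAt u' (φ' (u x) * (1 + u' x ^ 2)) x) {x y : ℝ}
    (hx : x ∈ s) (hy : y ∈ s) :
    catenaryEnergy φ u u' x = catenaryEnergy φ u u' y := by
  have hE : ∀ z ∈ s, HasDerivAt (catenaryEnergy φ u u') 0 z := fun z hz =>
    hasDerivAt_catenaryEnergy (hφ z hz) (hu z hz) (hu' z hz)
  exact hs.is_const_of_deriv_eq_zero hs'
    (fun z hz => (hE z hz).differentiableAt.differentiableWithinAt)
    (fun z hz => (hE z hz).deriv) hx hy

theorem one_add_sq_eq_exp_of_catenaryEnergy_eq {φ u u' : ℝ → ℝ} {x c : ℝ}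
    (hE : catenaryEnergy φ u u' x = exp (-2 * c)) :
    1 + u' x ^ 2 = exp (2 * (φ (u x) - c)) := by
  rw [catenaryEnergy, ← eq_div_iff (exp_pos _).ne', ← exp_sub] at hE
  rw [hE]
  ring_nf

theorem stmt0_general (a h Λ : ℝ)
    (φ φ' u u' : ℝ → ℝ)
    (hφ : ∀ s ∈ Ioi a, HasDerivAt φ (φ' s) s)
    (hu : ∀ x ∈ Ioo (-Λ) Λ, HasDerivAt u (u' x) x)
    (hode : ∀ x ∈ Ioo (-Λ) Λ, HasDerivAt u' (φ' (u x) * (1 + u' x ^ 2)) x)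
    (hrange : ∀ x ∈ Ioo (-Λ) Λ, u x ∈ Ioi a)
    (hu0 : u 0 = h) (hu'0 : u' 0 = 0) :
    ∀ x ∈ Ioo (-Λ) Λ, 1 + u' x ^ 2 = Real.exp (2 * (φ (u x) - φ h)) := by
  intro x hx
  have h0 : (0 : ℝ) ∈ Ioo (-Λ) Λ := by
    constructor <;> linarith [hx.1, hx.2]
  have hconst := catenaryEnergy_eq_of_isPreconnected isOpen_Ioo isPreconnected_Ioo
    (fun z hz => hφ (u z) (hrange z hz)) hu hode hx h0
  apply one_add_sq_eq_exp_of_catenaryEnergy_eq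
  simpa [catenaryEnergy, hu0, hu'0] using hconst

/-- First integral identity for the [φ,e₃]-catenary cylinder profile ODE:
if `u'' = φ'(u)(1+(u')²)`, `u 0 = h`, `u' 0 = 0`, then
`1 + u'(x)² = exp (2 (φ (u x) − φ h))` on `(−Λ, Λ)`. -/
theorem stmt0 (a h Λ : ℝ) (hΛ : 0 < Λ) (ha : a < h)
    (φ φ' u u' : ℝ → ℝ)
    (hφ : ∀ s ∈ Ioi a, HasDerivAt φ (φ' s) s)
    (hφc : ContinuousOn φ' (Ioi a))
    (hu : ∀ x ∈ Ioo (-Λ) Λ, HasDerivAt u (u' x) x)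
    (hode : ∀ x ∈ Ioo (-Λ) Λ, HasDerivAt u' (φ' (u x) * (1 + u' x ^ 2)) x)
    (hrange : ∀ x ∈ Ioo (-Λ) Λ, u x ∈ Ioi a)
    (hu0 : u 0 = h) (hu'0 : u' 0 = 0) :
    ∀ x ∈ Ioo (-Λ) Λ, 1 + u' x ^ 2 = Real.exp (2 * (φ (u x) - φ h)) :=
  stmt0_general a h Λ φ φ' u u' hφ hu hode hrange hu0 hu'0
end

section
/- Let φ : (a,∞) → ℝ be a C¹ strictly increasing function with φ(s) → ∞ as s → ∞, and let u be the maximal solution of u'' = φ'(u)(1+(u')²), u(0)=h, u'(0)=0, on (−Λ_h, Λ_h). Then lim_{x→Λ_h} u(x) = ∞ and lim_{x→Λ_h} u'(x) = ∞. -/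
/-!
Along a solution, `(1 + u'²) e^{-2φ(u)}` is constant, so `1 + u'² = e^{2(φ(u) - φ(h))}`. As
`u'' > 0` and `u'(0) = 0`, `u` increases on `[0, Λ)`, where `u' = g(u)` for
`g(s) = √(e^{2(φ(s) - φ(h))} - 1)`, and `g(s) → ∞` as `s → ∞`. So it suffices to show that `u` is
unbounded on `[0, Λ)`. Otherwise, on `[Λ/2, Λ)` the values of `u` stay in a compact subinterval
of `(h, ∞)`, on which `g` is Lipschitz: `φ'` is merely continuous, so the second-order system need
not be Lipschitz, but `g` is `C¹` on `(h, ∞)`. Picard–Lindelöf with a uniform existence time then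
continues `u' = g(u)` past `Λ`, and the even reflection of the continued solution solves the
original problem on a larger symmetric interval, contradicting maximality.
-/

open Set Filter Real Topology
open scoped NNReal

theorem strictMonoOn_of_forall_hasDerivAt_pos {D : Set ℝ} (hD : Convex ℝ D) {f f' : ℝ → ℝ}
    (hf : ∀ x ∈ D, HasDerivAt f (f' x) x) (hf' : ∀ x ∈ interior D, 0 < f' x) :
    StrictMonoOn f D :=
  strictMonoOn_of_hasDerivWithinAt_pos hD (fun x hx ↦ (hf x hx).continuousAt.continuousWithinAt)
    (fun x hx ↦ (hf x (interior_subset hx)).hasDerivWithinAt) hf'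

theorem exists_lipschitzOnWith_Icc_of_hasDerivAt {f f' : ℝ → ℝ} {p q : ℝ}
    (hf : ∀ x ∈ Icc p q, HasDerivAt f (f' x) x) (hf' : ContinuousOn f' (Icc p q)) :
    ∃ K, LipschitzOnWith K f (Icc p q) := by
  obtain ⟨C, hC⟩ := isCompact_Icc.exists_bound_of_continuousOn hf'
  exact ⟨C.toNNReal, (convex_Icc p q).lipschitzOnWith_of_nnnorm_hasDerivWithin_le
    (fun x hx ↦ (hf x hx).hasDerivWithinAt)
    fun x hx ↦ by rw [← NNReal.coe_le_coe, coe_nnnorm]; exact (hC x hx).trans (le_coe_toNNReal C)⟩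

theorem hasDerivAt_of_reflect {f f' F F' : ℝ → ℝ} {L σ : ℝ}
    (hf : ∀ t ∈ Ico 0 L, HasDerivWithinAt f (f' t) (Ici 0) t)
    (hpos : ∀ t, 0 ≤ t → F t = f t ∧ F' t = f' t)
    (hneg : ∀ t ≤ 0, F t = σ * f (-t) ∧ F' t = -(σ * f' (-t))) :
    ∀ t ∈ Ioo (-L) L, HasDerivAt F (F' t) t := by
  intro t ht
  have right (h0 : 0 ≤ t) : HasDerivWithinAt F (F' t) (Ici 0) t := by
    rw [(hpos t h0).2]
    exact (hf t ⟨h0, ht.2⟩).congr (fun s hs ↦ (hpos s hs).1) (hpos t h0).1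
  have left (h0 : t ≤ 0) : HasDerivWithinAt F (F' t) (Iic 0) t := by
    have hmaps : MapsTo Neg.neg (Iic (0 : ℝ)) (Ici 0) := fun _ hs ↦ mem_Ici.2 (neg_nonneg.2 hs)
    have := ((hf (-t) ⟨neg_nonneg.2 h0, by linarith [ht.1]⟩).comp t
      (hasDerivAt_neg t).hasDerivWithinAt hmaps).const_mul σ
    rw [(hneg t h0).2, show -(σ * f' (-t)) = σ * (f' (-t) * -1) by ring]
    exact this.congr (fun s hs ↦ (hneg s hs).1) (hneg t h0).1
  rcases lt_trichotomy t 0 with h0 | rfl | h0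
  · exact (left h0.le).hasDerivAt (Iic_mem_nhds h0)
  · simpa [Ici_union_Iic] using (right le_rfl).union (left le_rfl)
  · exact (right h0.le).hasDerivAt (Ici_mem_nhds h0)

theorem exists_hasDerivWithinAt_Icc_of_lipschitzWith {E : Type*} [NormedAddCommGroup E]
    [NormedSpace ℝ E] [CompleteSpace E] {F : E → E} {K : ℝ≥0} {C : ℝ} (hF : LipschitzWith K F)
    (hC : ∀ x, ‖F x‖ ≤ C) {t₀ t₁ : ℝ} (ht : t₀ ≤ t₁) (x₀ : E) :
    ∃ f : ℝ → E, f t₀ = x₀ ∧ ∀ t ∈ Icc t₀ t₁,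
      HasDerivWithinAt f (F (f t)) (Icc t₀ t₁) t ∧ ‖f t - x₀‖ ≤ C * (t - t₀) := by
  have hC0 : 0 ≤ C := (norm_nonneg _).trans (hC x₀)
  have hPL : IsPicardLindelof (fun _ ↦ F) (⟨t₀, le_rfl, ht⟩ : Icc t₀ t₁) x₀
      (C * (t₁ - t₀)).toNNReal 0 C.toNNReal K :=
    .of_time_independent (fun x _ ↦ (hC x).trans (le_coe_toNNReal C)) hF.lipschitzOnWith (by
      simp [Real.coe_toNNReal _ hC0, sub_nonneg.2 ht])
  obtain ⟨f, hf₀, hf⟩ := hPL.exists_eq_forall_mem_Icc_hasDerivWithinAt₀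
  have hbound := norm_image_sub_le_of_norm_deriv_le_segment' hf fun t _ ↦ hC (f t)
  exact ⟨f, hf₀, fun t ht ↦ ⟨hf t ht, hf₀ ▸ hbound t ht⟩⟩

theorem MonotoneOn.tendsto_nhdsLT_atTop_of_not_bddAbove {f : ℝ → ℝ} {p q : ℝ}
    (hf : MonotoneOn f (Ico p q)) (hunb : ¬ BddAbove (f '' Ico p q)) :
    Tendsto f (𝓝[<] q) atTop := by
  refine tendsto_atTop.2 fun b ↦ ?_
  obtain ⟨_, ⟨x, hx, rfl⟩, hbx⟩ := not_bddAbove_iff.1 hunb b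
  filter_upwards [Ioo_mem_nhdsLT hx.2] with y hy
  exact hbx.le.trans (hf hx ⟨hx.1.trans hy.1.le, hy.2⟩ hy.1.le)

theorem exists_pos_forall_exists_hasDerivWithinAt_Icc {F : ℝ → ℝ} {K : ℝ≥0} {c d r : ℝ}
    (hcd : c ≤ d) (hr : 0 < r) (hF : LipschitzOnWith K F (Icc (c - r) (d + r))) :
    ∃ ε > 0, ∀ τ, ∀ x₀ ∈ Icc c d, ∃ f : ℝ → ℝ, f τ = x₀ ∧ ∀ t ∈ Icc τ (τ + ε),
      HasDerivWithinAt f (F (f t)) (Icc τ (τ + ε)) t ∧ f t ∈ Icc (c - r) (d + r) := by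
  have hS : c - r ≤ d + r := by linarith
  -- Clamping the argument gives a bounded, globally Lipschitz field that agrees with `F`
  -- wherever the solution can reach in time `ε`.
  set G : ℝ → ℝ := fun x ↦ F (projIcc (c - r) (d + r) hS x)
  have hGF : ∀ x ∈ Icc (c - r) (d + r), G x = F x := fun x hx ↦ by simp [G, projIcc_of_mem hS hx]
  have hG : LipschitzWith K G := by
    have := hF.to_restrict.comp (LipschitzWith.projIcc hS)
    rwa [mul_one] at this
  obtain ⟨C, hC⟩ := isCompact_Icc.exists_bound_of_continuousOn hF.continuousOn
  have hGC : ∀ x, ‖G x‖ ≤ C := fun x ↦ hC _ (projIcc (c - r) (d + r) hS x).2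
  have hC0 : 0 ≤ C := (norm_nonneg _).trans (hGC 0)
  refine ⟨r / (C + 1), by positivity, fun τ x₀ hx₀ ↦ ?_⟩
  obtain ⟨f, hf₀, hf⟩ := exists_hasDerivWithinAt_Icc_of_lipschitzWith hG hGC
    (le_add_of_nonneg_right (by positivity : 0 ≤ r / (C + 1))) x₀
  refine ⟨f, hf₀, fun t ht ↦ ?_⟩
  have hdist : |f t - x₀| ≤ r := by
    calc |f t - x₀| ≤ C * (t - τ) := (hf t ht).2
      _ ≤ C * (r / (C + 1)) := by gcongr; linarith [ht.2]
      _ ≤ r := by rw [mul_div_assoc', div_le_iff₀ (by linarith)]; nlinarith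
  have hft : f t ∈ Icc (c - r) (d + r) := by
    obtain ⟨h₁, h₂⟩ := abs_le.1 hdist
    exact ⟨by linarith [hx₀.1], by linarith [hx₀.2]⟩
  exact ⟨hGF _ hft ▸ (hf t ht).1, hft⟩

theorem exists_extension_of_lipschitzOnWith {F : ℝ → ℝ} {K : ℝ≥0} {c d r : ℝ} (hr : 0 < r)
    (hF : LipschitzOnWith K F (Icc (c - r) (d + r))) {y : ℝ → ℝ} {t₀ Λ : ℝ} (ht₀ : t₀ < Λ)
    (hy : ∀ t ∈ Ico t₀ Λ, HasDerivAt y (F (y t)) t ∧ y t ∈ Icc c d) :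
    ∃ Λ' > Λ, ∃ z : ℝ → ℝ, (∀ t < Λ, z t = y t) ∧
      ∀ t ∈ Ico t₀ Λ', HasDerivAt z (F (z t)) t ∧ z t ∈ Icc (c - r) (d + r) := by
  have hcd : c ≤ d := (hy t₀ ⟨le_rfl, ht₀⟩).2.1.trans (hy t₀ ⟨le_rfl, ht₀⟩).2.2
  have hsub : Icc c d ⊆ Icc (c - r) (d + r) := Icc_subset_Icc (by linarith) (by linarith)
  obtain ⟨ε, hε, hsol⟩ := exists_pos_forall_exists_hasDerivWithinAt_Icc hcd hr hF
  obtain ⟨δ, hδ0, hδε, hδΛ⟩ : ∃ δ > 0, δ ≤ ε ∧ δ ≤ Λ - t₀ :=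
    ⟨min ε (Λ - t₀), lt_min hε (by linarith), min_le_left _ _, min_le_right _ _⟩
  set τ := Λ - δ / 2 with hτ
  obtain ⟨f, hf₀, hf⟩ := hsol τ (y τ) (hy τ ⟨by linarith, by linarith⟩).2
  have hyf : ∀ t ∈ Ico τ Λ, y t = f t := by
    intro t ht
    refine ODE_solution_unique_of_mem_Icc_right (v := fun _ ↦ F) (fun _ _ ↦ hF) ?_ ?_ ?_ ?_ ?_ ?_
      hf₀.symm ⟨ht.1, le_rfl⟩
    · exact HasDerivAt.continuousOn fun s hs ↦ (hy s ⟨by linarith [hs.1], hs.2.trans_lt ht.2⟩).1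
    · exact fun s hs ↦ (hy s ⟨by linarith [hs.1], hs.2.trans ht.2⟩).1.hasDerivWithinAt
    · exact fun s hs ↦ hsub (hy s ⟨by linarith [hs.1], hs.2.trans ht.2⟩).2
    · exact (HasDerivWithinAt.continuousOn fun s hs ↦ (hf s hs).1).mono
        (Icc_subset_Icc_right (by linarith [ht.2]))
    · exact fun s hs ↦ (hf s ⟨hs.1, by linarith [hs.2, ht.2]⟩).1.mono_of_mem_nhdsWithin
        (Icc_mem_nhdsGE_of_mem ⟨hs.1, by linarith [hs.2, ht.2]⟩)
    · exact fun s hs ↦ (hf s ⟨hs.1, by linarith [hs.2, ht.2]⟩).2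
  refine ⟨τ + δ, by linarith, fun t ↦ if t < Λ then y t else f t, fun t ht ↦ if_pos ht,
    fun t ht ↦ ?_⟩
  rcases lt_or_ge t Λ with htΛ | htΛ
  · have hyt := hy t ⟨ht.1, htΛ⟩
    have hev : (fun t ↦ if t < Λ then y t else f t) =ᶠ[𝓝 t] y :=
      eventually_of_mem (Iio_mem_nhds htΛ) fun s hs ↦ if_pos hs
    simp only [if_pos htΛ]
    exact ⟨hyt.1.congr_of_eventuallyEq hev, hsub hyt.2⟩
  · have htτ : t ∈ Ioo τ (τ + ε) := ⟨by linarith, by linarith [ht.2]⟩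
    have hev : (fun t ↦ if t < Λ then y t else f t) =ᶠ[𝓝 t] f :=
      eventually_of_mem (Ioo_mem_nhds htτ.1 htτ.2) fun s hs ↦ by
        by_cases hsΛ : s < Λ
        · simp only [if_pos hsΛ, hyf s ⟨hs.1.le, hsΛ⟩]
        · simp only [if_neg hsΛ]
    have hft := hf t (Ioo_subset_Icc_self htτ)
    simp only [if_neg htΛ.not_gt]
    exact ⟨(hft.1.hasDerivAt (Icc_mem_nhds htτ.1 htτ.2)).congr_of_eventuallyEq hev, hft.2⟩

/-- The first integral `1 + u'² = e^{2(φ(u) - φ(h))}` solved for `u' ≥ 0`. -/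
noncomputable def firstIntegralSlope (φ : ℝ → ℝ) (h s : ℝ) : ℝ := √(exp (2 * (φ s - φ h)) - 1)

section FirstIntegralSlope

variable {φ φ' : ℝ → ℝ} {h s : ℝ}

theorem firstIntegralSlope_self : firstIntegralSlope φ h h = 0 := by simp [firstIntegralSlope]

theorem firstIntegralSlope_pos (hs : φ h < φ s) : 0 < firstIntegralSlope φ h s :=
  sqrt_pos.2 <| sub_pos.2 <| one_lt_exp_iff.2 (by linarith)

theorem sq_firstIntegralSlope (hs : φ h ≤ φ s) :
    firstIntegralSlope φ h s ^ 2 = exp (2 * (φ s - φ h)) - 1 :=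
  sq_sqrt <| sub_nonneg.2 <| one_le_exp (by linarith)

theorem firstIntegralSlope_eq_of_one_add_sq_eq {p : ℝ} (hp : 0 ≤ p)
    (hps : 1 + p ^ 2 = exp (2 * (φ s - φ h))) : firstIntegralSlope φ h s = p := by
  rw [firstIntegralSlope, ← hps, add_sub_cancel_left, sqrt_sq hp]

theorem hasDerivAt_firstIntegralSlope {φ's : ℝ} (hφ : HasDerivAt φ φ's s) (hs : φ h < φ s) :
    HasDerivAt (firstIntegralSlope φ h)
      (φ's * (1 + firstIntegralSlope φ h s ^ 2) / firstIntegralSlope φ h s) s := by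
  have hpos := firstIntegralSlope_pos hs
  have := (((hφ.sub_const (φ h)).const_mul 2).exp.sub_const 1).sqrt
    (sub_pos.2 <| one_lt_exp_iff.2 (by linarith)).ne'
  refine this.congr_deriv ?_
  rw [sq_firstIntegralSlope hs.le]
  unfold firstIntegralSlope at hpos ⊢
  field_simp
  ring

theorem HasDerivAt.firstIntegralSlope_comp {z : ℝ → ℝ} {x : ℝ}
    (hz : HasDerivAt z (firstIntegralSlope φ h (z x)) x) (hφ : HasDerivAt φ (φ' (z x)) (z x))
    (hzx : φ h < φ (z x)) :
    HasDerivAt (fun t ↦ firstIntegralSlope φ h (z t))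
      (φ' (z x) * (1 + firstIntegralSlope φ h (z x) ^ 2)) x := by
  refine ((hasDerivAt_firstIntegralSlope hφ hzx).comp x hz).congr_deriv ?_
  rw [div_mul_cancel₀ _ (firstIntegralSlope_pos hzx).ne']

theorem tendsto_firstIntegralSlope_atTop (hφ : Tendsto φ atTop atTop) :
    Tendsto (firstIntegralSlope φ h) atTop atTop := by
  refine tendsto_sqrt_atTop.comp <| tendsto_atTop_add_const_right _ (-1) <|
    tendsto_exp_atTop.comp <| Tendsto.const_mul_atTop two_pos ?_
  exact tendsto_atTop_add_const_right _ (-φ h) hφ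

theorem exists_lipschitzOnWith_firstIntegralSlope {p q : ℝ}
    (hφ : ∀ s ∈ Icc p q, HasDerivAt φ (φ' s) s) (hφ' : ContinuousOn φ' (Icc p q))
    (hpq : ∀ s ∈ Icc p q, φ h < φ s) :
    ∃ K, LipschitzOnWith K (firstIntegralSlope φ h) (Icc p q) := by
  have hderiv s (hs : s ∈ Icc p q) := hasDerivAt_firstIntegralSlope (hφ s hs) (hpq s hs)
  have hcont : ContinuousOn (firstIntegralSlope φ h) (Icc p q) :=
    fun s hs ↦ (hderiv s hs).continuousAt.continuousWithinAt
  exact exists_lipschitzOnWith_Icc_of_hasDerivAt hderiv <|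
    (hφ'.mul (continuousOn_const.add (hcont.pow 2))).div hcont
      fun s hs ↦ (firstIntegralSlope_pos (hpq s hs)).ne'

end FirstIntegralSlope

theorem exists_even_solution_of_half_solution {a h L : ℝ} {φ' v v' : ℝ → ℝ}
    (hv : ∀ x ∈ Ico 0 L, HasDerivWithinAt v (v' x) (Ici 0) x)
    (hv' : ∀ x ∈ Ico 0 L, HasDerivWithinAt v' (φ' (v x) * (1 + v' x ^ 2)) (Ici 0) x)
    (hrange : ∀ x ∈ Ico 0 L, v x ∈ Ioi a) (hv0 : v 0 = h) (hv'0 : v' 0 = 0) :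
    ∃ V V' : ℝ → ℝ,
      (∀ x ∈ Ioo (-L) L, HasDerivAt V (V' x) x) ∧
      (∀ x ∈ Ioo (-L) L, HasDerivAt V' (φ' (V x) * (1 + V' x ^ 2)) x) ∧
      (∀ x ∈ Ioo (-L) L, V x ∈ Ioi a) ∧ V 0 = h ∧ V' 0 = 0 := by
  set V' : ℝ → ℝ := fun x ↦ if 0 ≤ x then v' x else -v' (-x)
  have hV'pos : ∀ x, 0 ≤ x → V' x = v' x := fun x hx ↦ if_pos hx
  have hV'neg : ∀ x ≤ 0, V' x = -v' (-x) := by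
    intro x hx
    rcases hx.lt_or_eq with hx | rfl
    · exact if_neg hx.not_ge
    · simp [hV'pos, hv'0]
  refine ⟨fun x ↦ v |x|, V', hasDerivAt_of_reflect (σ := 1) hv (fun x hx ↦ ?_) (fun x hx ↦ ?_),
    hasDerivAt_of_reflect (σ := -1) hv' (fun x hx ↦ ?_) (fun x hx ↦ ?_),
    fun x hx ↦ hrange |x| ⟨abs_nonneg x, abs_lt.2 hx⟩, by simpa using hv0, hV'pos 0 le_rfl ▸ hv'0⟩
  · simp [abs_of_nonneg hx, hV'pos x hx]
  · simp [abs_of_nonpos hx, hV'neg x hx]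
  · simp [abs_of_nonneg hx, hV'pos x hx]
  · simp [abs_of_nonpos hx, hV'neg x hx]

section Solution

variable {a h Λ : ℝ} {φ φ' u u' : ℝ → ℝ}

theorem one_add_sq_deriv_eq_exp (hφ : ∀ s ∈ Ioi a, HasDerivAt φ (φ' s) s)
    (hu : ∀ x ∈ Ioo (-Λ) Λ, HasDerivAt u (u' x) x)
    (hode : ∀ x ∈ Ioo (-Λ) Λ, HasDerivAt u' (φ' (u x) * (1 + u' x ^ 2)) x)
    (hrange : ∀ x ∈ Ioo (-Λ) Λ, u x ∈ Ioi a) :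
    ∀ x ∈ Ioo (-Λ) Λ, 1 + u' x ^ 2 = (1 + u' 0 ^ 2) * exp (2 * (φ (u x) - φ (u 0))) := by
  set E : ℝ → ℝ := fun x ↦ (1 + u' x ^ 2) * exp (-(2 * φ (u x)))
  have hE : ∀ x ∈ Ioo (-Λ) Λ, HasDerivAt E 0 x := by
    intro x hx
    have hφu := (hφ _ (hrange x hx)).comp x (hu x hx)
    refine ((((hode x hx).pow 2).const_add 1).mul (hφu.const_mul 2).neg.exp).congr_deriv ?_
    simp only [Function.comp_apply, Pi.neg_apply, Pi.pow_apply]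
    ring
  intro x hx
  have h0 : (0 : ℝ) ∈ Ioo (-Λ) Λ := ⟨by linarith [hx.1, hx.2], by linarith [hx.1, hx.2]⟩
  have hEx : E x = E 0 := isOpen_Ioo.is_const_of_deriv_eq_zero isPreconnected_Ioo
    (fun y hy ↦ (hE y hy).differentiableAt.differentiableWithinAt) (fun y hy ↦ (hE y hy).deriv)
    hx h0
  simp only [E] at hEx
  calc 1 + u' x ^ 2 = (1 + u' x ^ 2) * exp (-(2 * φ (u x))) * exp (2 * φ (u x)) := by
        rw [mul_assoc, ← exp_add, neg_add_cancel, exp_zero, mul_one]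
    _ = (1 + u' 0 ^ 2) * exp (2 * (φ (u x) - φ (u 0))) := by
        rw [hEx, mul_assoc, ← exp_add]; ring_nf

theorem deriv_pos_of_solution (hφpos : ∀ s ∈ Ioi a, 0 < φ' s)
    (hode : ∀ x ∈ Ioo (-Λ) Λ, HasDerivAt u' (φ' (u x) * (1 + u' x ^ 2)) x)
    (hrange : ∀ x ∈ Ioo (-Λ) Λ, u x ∈ Ioi a) (hu'0 : u' 0 = 0) :
    ∀ x ∈ Ioo 0 Λ, 0 < u' x := by
  have hmono : StrictMonoOn u' (Ioo (-Λ) Λ) :=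
    strictMonoOn_of_forall_hasDerivAt_pos (convex_Ioo _ _) hode fun x hx ↦
      mul_pos (hφpos _ (hrange x (interior_subset hx))) (by positivity)
  intro x hx
  have h0 : (0 : ℝ) ∈ Ioo (-Λ) Λ := ⟨by linarith [hx.1, hx.2], by linarith [hx.1, hx.2]⟩
  exact hu'0 ▸ hmono h0 ⟨by linarith [hx.1, hx.2], hx.2⟩ hx.1

theorem deriv_eq_firstIntegralSlope_of_solution (hφ : ∀ s ∈ Ioi a, HasDerivAt φ (φ' s) s)
    (hφpos : ∀ s ∈ Ioi a, 0 < φ' s)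
    (hu : ∀ x ∈ Ioo (-Λ) Λ, HasDerivAt u (u' x) x)
    (hode : ∀ x ∈ Ioo (-Λ) Λ, HasDerivAt u' (φ' (u x) * (1 + u' x ^ 2)) x)
    (hrange : ∀ x ∈ Ioo (-Λ) Λ, u x ∈ Ioi a) (hu0 : u 0 = h) (hu'0 : u' 0 = 0) :
    ∀ x ∈ Ico 0 Λ, u' x = firstIntegralSlope φ h (u x) := by
  intro x hx
  have hx' : x ∈ Ioo (-Λ) Λ := ⟨by linarith [hx.1, hx.2], hx.2⟩
  have hnonneg : 0 ≤ u' x := by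
    rcases hx.1.eq_or_lt with rfl | hx0
    · exact hu'0.ge
    · exact (deriv_pos_of_solution hφpos hode hrange hu'0 x ⟨hx0, hx.2⟩).le
  refine (firstIntegralSlope_eq_of_one_add_sq_eq hnonneg ?_).symm
  simpa [hu0, hu'0] using one_add_sq_deriv_eq_exp hφ hu hode hrange x hx'

theorem exists_extension_of_bddAbove (hΛ : 0 < Λ) (hφ : ∀ s ∈ Ioi a, HasDerivAt φ (φ' s) s)
    (hφc : ContinuousOn φ' (Ioi a)) (hφmono : StrictMonoOn φ (Ioi a)) (ha : a < h)
    (hu : ∀ x ∈ Ioo (-Λ) Λ, HasDerivAt u (u' x) x) (hu0 : u 0 = h)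
    (hmono : StrictMonoOn u (Ico 0 Λ))
    (hslope : ∀ x ∈ Ico 0 Λ, u' x = firstIntegralSlope φ h (u x))
    (hbdd : BddAbove (u '' Ico 0 Λ)) :
    ∃ L > Λ, ∃ z : ℝ → ℝ, (∀ x < Λ, z x = u x) ∧
      ∀ x ∈ Ico (Λ / 2) L, HasDerivAt z (firstIntegralSlope φ h (z x)) x ∧ h < z x := by
  obtain ⟨M, hM⟩ := hbdd
  have hΛ2 : Λ / 2 ∈ Ico 0 Λ := ⟨by positivity, half_lt_self hΛ⟩
  set c := u (Λ / 2)
  have hc : h < c := hu0 ▸ hmono ⟨le_rfl, hΛ⟩ hΛ2 (half_pos hΛ)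
  have habove : ∀ s ∈ Icc (c - (c - h) / 2) (M + (c - h) / 2), h < s :=
    fun s hs ↦ by linarith [hs.1]
  have hsub : Icc (c - (c - h) / 2) (M + (c - h) / 2) ⊆ Ioi a :=
    fun s hs ↦ ha.trans (habove s hs)
  obtain ⟨K, hK⟩ := exists_lipschitzOnWith_firstIntegralSlope (fun s hs ↦ hφ s (hsub hs))
    (hφc.mono hsub) fun s hs ↦ hφmono ha (hsub hs) (habove s hs)
  obtain ⟨L, hL, z, hzu, hz⟩ := exists_extension_of_lipschitzOnWith (by linarith) hK
    (half_lt_self hΛ) (y := u) fun x hx ↦ by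
      have hx' : x ∈ Ico 0 Λ := ⟨hΛ2.1.trans hx.1, hx.2⟩
      refine ⟨hslope x hx' ▸ hu x ⟨by linarith [hx'.1], hx.2⟩, ?_, hM (mem_image_of_mem u hx')⟩
      exact hmono.monotoneOn hΛ2 hx' hx.1
  exact ⟨L, hL, z, hzu, fun x hx ↦ ⟨(hz x hx).1, habove _ (hz x hx).2⟩⟩

theorem exists_half_solution_of_bddAbove (hΛ : 0 < Λ) (hφ : ∀ s ∈ Ioi a, HasDerivAt φ (φ' s) s)
    (hφc : ContinuousOn φ' (Ioi a)) (hφmono : StrictMonoOn φ (Ioi a))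
    (hu : ∀ x ∈ Ioo (-Λ) Λ, HasDerivAt u (u' x) x)
    (hode : ∀ x ∈ Ioo (-Λ) Λ, HasDerivAt u' (φ' (u x) * (1 + u' x ^ 2)) x)
    (hrange : ∀ x ∈ Ioo (-Λ) Λ, u x ∈ Ioi a) (hu0 : u 0 = h)
    (hmono : StrictMonoOn u (Ico 0 Λ))
    (hslope : ∀ x ∈ Ico 0 Λ, u' x = firstIntegralSlope φ h (u x))
    (hbdd : BddAbove (u '' Ico 0 Λ)) :
    ∃ L > Λ, ∃ v v' : ℝ → ℝ,
      (∀ x ∈ Ico 0 L, HasDerivWithinAt v (v' x) (Ici 0) x) ∧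
      (∀ x ∈ Ico 0 L, HasDerivWithinAt v' (φ' (v x) * (1 + v' x ^ 2)) (Ici 0) x) ∧
      (∀ x ∈ Ico 0 L, v x ∈ Ioi a) ∧ v 0 = h ∧ v' 0 = 0 := by
  have ha : a < h := hu0 ▸ hrange 0 ⟨by linarith, hΛ⟩
  obtain ⟨L, hL, z, hzu, hz⟩ :=
    exists_extension_of_bddAbove hΛ hφ hφc hφmono ha hu hu0 hmono hslope hbdd
  have hmem {x} (hx : x ∈ Ico 0 Λ) : x ∈ Ioo (-Λ) Λ := ⟨by linarith [hx.1], hx.2⟩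
  have hzu' {x} (hx : x ∈ Ico 0 Λ) : z =ᶠ[𝓝 x] u :=
    eventually_of_mem (Iio_mem_nhds hx.2) hzu
  have hcases {x} (hx : x ∈ Ico 0 L) : x ∈ Ico 0 Λ ∨ x ∈ Ico (Λ / 2) L := by
    rcases lt_or_ge x Λ with hxΛ | hxΛ
    exacts [.inl ⟨hx.1, hxΛ⟩, .inr ⟨by linarith, hx.2⟩]
  refine ⟨L, hL, z, fun x ↦ firstIntegralSlope φ h (z x), fun x hx ↦ ?_, fun x hx ↦ ?_,
    fun x hx ↦ ?_, hzu 0 hΛ ▸ hu0, by simp [hzu 0 hΛ, hu0, firstIntegralSlope_self]⟩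
  · rcases hcases hx with hx | hx
    · simp only [hzu x hx.2, ← hslope x hx]
      exact ((hu x (hmem hx)).congr_of_eventuallyEq (hzu' hx)).hasDerivWithinAt
    · exact (hz x hx).1.hasDerivWithinAt
  · rcases hcases hx with hx | hx
    · have hev : (fun t ↦ firstIntegralSlope φ h (z t)) =ᶠ[𝓝[Ici 0] x] u' := by
        filter_upwards [inter_mem_nhdsWithin (Ici 0) (Iio_mem_nhds hx.2), self_mem_nhdsWithin]
          with t ht ht0 using by rw [hzu t ht.2, hslope t ⟨ht0, ht.2⟩]
      simp only [hzu x hx.2, ← hslope x hx]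
      exact (hode x (hmem hx)).hasDerivWithinAt.congr_of_eventuallyEq hev
        (by rw [hzu x hx.2, hslope x hx])
    · have hzx := (hz x hx).2
      exact ((hz x hx).1.firstIntegralSlope_comp (hφ _ (ha.trans hzx))
        (hφmono ha (ha.trans hzx) hzx)).hasDerivWithinAt
  · rcases hcases hx with hx | hx
    · exact hzu x hx.2 ▸ hrange x (hmem hx)
    · exact ha.trans (hz x hx).2

end Solution

theorem stmt6_general (a h Λ : ℝ) (hΛ : 0 < Λ)
    (φ φ' u u' : ℝ → ℝ)
    (hφ : ∀ s ∈ Ioi a, HasDerivAt φ (φ' s) s)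
    (hφc : ContinuousOn φ' (Ioi a))
    (hφpos : ∀ s ∈ Ioi a, 0 < φ' s)
    (htop : Tendsto φ atTop atTop)
    (hu : ∀ x ∈ Ioo (-Λ) Λ, HasDerivAt u (u' x) x)
    (hode : ∀ x ∈ Ioo (-Λ) Λ, HasDerivAt u' (φ' (u x) * (1 + u' x ^ 2)) x)
    (hrange : ∀ x ∈ Ioo (-Λ) Λ, u x ∈ Ioi a)
    (hu0 : u 0 = h) (hu'0 : u' 0 = 0)
    (hmax : ∀ Λ' : ℝ, Λ < Λ' →
      ¬ ∃ v v' : ℝ → ℝ,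
          (∀ x ∈ Ioo (-Λ') Λ', HasDerivAt v (v' x) x) ∧
          (∀ x ∈ Ioo (-Λ') Λ', HasDerivAt v' (φ' (v x) * (1 + v' x ^ 2)) x) ∧
          (∀ x ∈ Ioo (-Λ') Λ', v x ∈ Ioi a) ∧ v 0 = h ∧ v' 0 = 0) :
    Tendsto u (nhdsWithin Λ (Iio Λ)) atTop ∧
    Tendsto u' (nhdsWithin Λ (Iio Λ)) atTop := by
  have hφmono : StrictMonoOn φ (Ioi a) :=
    strictMonoOn_of_forall_hasDerivAt_pos (convex_Ioi a) hφ (by simpa using hφpos)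
  have hmono : StrictMonoOn u (Ico 0 Λ) :=
    strictMonoOn_of_forall_hasDerivAt_pos (convex_Ico 0 Λ)
      (fun x hx ↦ hu x ⟨by linarith [hx.1], hx.2⟩)
      (by simpa using deriv_pos_of_solution hφpos hode hrange hu'0)
  have hslope := deriv_eq_firstIntegralSlope_of_solution hφ hφpos hu hode hrange hu0 hu'0
  have hunb : ¬ BddAbove (u '' Ico 0 Λ) := fun hbdd ↦ by
    obtain ⟨L, hL, v, v', hv, hv', hva, hv0, hv'0⟩ :=
      exists_half_solution_of_bddAbove hΛ hφ hφc hφmono hu hode hrange hu0 hmono hslope hbdd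
    exact hmax L hL (exists_even_solution_of_half_solution hv hv' hva hv0 hv'0)
  have hu_top := hmono.monotoneOn.tendsto_nhdsLT_atTop_of_not_bddAbove hunb
  refine ⟨hu_top, ((tendsto_firstIntegralSlope_atTop (h := h) htop).comp hu_top).congr' ?_⟩
  filter_upwards [Ioo_mem_nhdsLT hΛ] with x hx using (hslope x ⟨hx.1.le, hx.2⟩).symm

/-- For `φ` C¹, strictly increasing and unbounded above, the maximal solution
of `u'' = φ'(u)(1+(u')²)`, `u 0 = h`, `u' 0 = 0` on its maximal interval
`(−Λ_h, Λ_h)` satisfies `u → ∞` and `u' → ∞` as `x → Λ_h⁻`.  Maximality is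
encoded by the non-existence of a solution on any strictly larger symmetric
interval. -/
theorem stmt6 (a h Λ : ℝ) (hΛ : 0 < Λ) (ha : a < h)
    (φ φ' u u' : ℝ → ℝ)
    (hφ : ∀ s ∈ Ioi a, HasDerivAt φ (φ' s) s)
    (hφc : ContinuousOn φ' (Ioi a))
    (hφpos : ∀ s ∈ Ioi a, 0 < φ' s)
    (htop : Tendsto φ atTop atTop)
    (hu : ∀ x ∈ Ioo (-Λ) Λ, HasDerivAt u (u' x) x)
    (hode : ∀ x ∈ Ioo (-Λ) Λ, HasDerivAt u' (φ' (u x) * (1 + u' x ^ 2)) x)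
    (hrange : ∀ x ∈ Ioo (-Λ) Λ, u x ∈ Ioi a)
    (hu0 : u 0 = h) (hu'0 : u' 0 = 0)
    (hmax : ∀ Λ' : ℝ, Λ < Λ' →
      ¬ ∃ v v' : ℝ → ℝ,
          (∀ x ∈ Ioo (-Λ') Λ', HasDerivAt v (v' x) x) ∧
          (∀ x ∈ Ioo (-Λ') Λ', HasDerivAt v' (φ' (v x) * (1 + v' x ^ 2)) x) ∧
          (∀ x ∈ Ioo (-Λ') Λ', v x ∈ Ioi a) ∧ v 0 = h ∧ v' 0 = 0) :
    Tendsto u (nhdsWithin Λ (Iio Λ)) atTop ∧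
    Tendsto u' (nhdsWithin Λ (Iio Λ)) atTop :=
  stmt6_general a h Λ hΛ φ φ' u u' hφ hφc hφpos htop hu hode hrange hu0 hu'0 hmax
end

section
/- Let φ : (a,∞) → ℝ be a C¹ function and suppose there exists k > 0 with φ'(s) ≥ k for all s ∈ (a,∞). Then the maximal solution u of u'' = φ'(u)(1+(u')²), u(0)=h, u'(0)=0 has maximal interval (−Λ_h, Λ_h) with Λ_h ≤ π/(2k). -/
/-!
Along `x ≥ 0` the slope `v = u'` obeys the Riccati inequality `v' ≥ k (1 + v²)`, i.e.
`(arctan v)' ≥ k`. Since `v 0 = 0`, this gives `k x ≤ arctan (v x) < π / 2` wherever the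
solution exists, so it cannot survive past `x = π / (2k)`.
-/

open Set Real

section Riccati

variable {v v' : ℝ → ℝ} {k : ℝ}

theorem monotoneOn_arctan_sub_mul_of_riccati {s : Set ℝ} (hs : Convex ℝ s)
    (hv : ∀ x ∈ s, HasDerivAt v (v' x) x) (hk : ∀ x ∈ s, k * (1 + v x ^ 2) ≤ v' x) :
    MonotoneOn (fun x => arctan (v x) - k * x) s := by
  have hderiv : ∀ x ∈ s,
      HasDerivAt (fun x => arctan (v x) - k * x) (v' x / (1 + v x ^ 2) - k) x := by
    intro x hx
    exact ((hv x hx).arctan.sub ((hasDerivAt_id' x).const_mul k)).congr_deriv (by ring)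
  refine monotoneOn_of_hasDerivWithinAt_nonneg hs
    (fun x hx => (hderiv x hx).continuousAt.continuousWithinAt)
    (fun x hx => (hderiv x (interior_subset hx)).hasDerivWithinAt) fun x hx => ?_
  have hx := interior_subset hx
  rw [sub_nonneg, le_div_iff₀ (by positivity)]
  exact hk x hx

theorem mul_lt_pi_div_two_of_riccati {T : ℝ} (hT : 0 ≤ T)
    (hv : ∀ x ∈ Icc 0 T, HasDerivAt v (v' x) x)
    (hk : ∀ x ∈ Icc 0 T, k * (1 + v x ^ 2) ≤ v' x) (hv0 : 0 ≤ v 0) :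
    k * T < π / 2 := by
  have hmono := monotoneOn_arctan_sub_mul_of_riccati (convex_Icc 0 T) hv hk
    (left_mem_Icc.2 hT) (right_mem_Icc.2 hT) hT
  have harctan0 : 0 ≤ arctan (v 0) := arctan_nonneg.2 hv0
  simp only [mul_zero, sub_zero] at hmono
  linarith [arctan_lt_pi_div_two (v T)]

end Riccati

theorem stmt7_general (a k Λ : ℝ) (hk : 0 < k)
    (φ' u u' : ℝ → ℝ)
    (hφk : ∀ s ∈ Ioi a, k ≤ φ' s)
    (hode : ∀ x ∈ Ioo (-Λ) Λ, HasDerivAt u' (φ' (u x) * (1 + u' x ^ 2)) x)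
    (hrange : ∀ x ∈ Ioo (-Λ) Λ, u x ∈ Ioi a)
    (hu'0 : u' 0 = 0) :
    Λ ≤ π / (2 * k) := by
  refine le_of_not_gt fun hΛ => ?_
  set T := π / (2 * k) with hT_def
  have hT : 0 ≤ T := by positivity
  have hsub : Icc 0 T ⊆ Ioo (-Λ) Λ := fun x hx => ⟨by linarith [hx.1], by linarith [hx.2]⟩
  have hriccati : ∀ x ∈ Icc 0 T, k * (1 + u' x ^ 2) ≤ φ' (u x) * (1 + u' x ^ 2) :=
    fun x hx => mul_le_mul_of_nonneg_right (hφk _ (hrange x (hsub hx))) (by positivity)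
  have hlt := mul_lt_pi_div_two_of_riccati hT (fun x hx => hode x (hsub hx)) hriccati hu'0.ge
  have hkT : k * T = π / 2 := by rw [hT_def]; field_simp
  exact hlt.ne hkT

/-- If `φ' ≥ k > 0` on `(a,∞)`, then any solution of `u'' = φ'(u)(1+(u')²)`,
`u 0 = h`, `u' 0 = 0` on `(−Λ, Λ)` must have `Λ ≤ π/(2k)`; in particular the
maximal interval `(−Λ_h, Λ_h)` satisfies `Λ_h ≤ π/(2k)`. -/
theorem stmt7 (a h k Λ : ℝ) (hk : 0 < k) (ha : a < h)
    (φ φ' u u' : ℝ → ℝ)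
    (hφ : ∀ s ∈ Ioi a, HasDerivAt φ (φ' s) s)
    (hφc : ContinuousOn φ' (Ioi a))
    (hφk : ∀ s ∈ Ioi a, k ≤ φ' s)
    (hu : ∀ x ∈ Ioo (-Λ) Λ, HasDerivAt u (u' x) x)
    (hode : ∀ x ∈ Ioo (-Λ) Λ, HasDerivAt u' (φ' (u x) * (1 + u' x ^ 2)) x)
    (hrange : ∀ x ∈ Ioo (-Λ) Λ, u x ∈ Ioi a)
    (hu0 : u 0 = h) (hu'0 : u' 0 = 0) :
    Λ ≤ π / (2 * k) :=
  stmt7_general a k Λ hk φ' u u' hφk hode hrange hu'0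
end

section
/- Let φ : (a,∞) → ℝ be C¹ strictly increasing with φ unbounded above and e^{−φ} ∈ L¹((h,∞)), and let u be the maximal solution of u''=φ'(u)(1+(u')²), u(0)=h, u'(0)=0, with maximal interval (−Λ_h,Λ_h), Λ_h < ∞. Then the half-period satisfies the explicit formula Λ_h = ∫_h^∞ (e^{2(φ(λ)−φ(h))} − 1)^{−1/2} dλ. -/
/-!
Along a solution, `log (1 + u'²) - 2 φ(u)` is conserved, so `u' = sign x · r(u)` with
`r(λ) = √(e^{2(φ(λ) - φ(h))} - 1)`, and the change of variables `λ = u(t)` shows that the solution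
reaches the height `λ` at the time `T(λ) = ∫_h^λ ds / r(s)`. Conversely, for every `λ₀ > h` the
even extension of the inverse of `T` on `[h, λ₀]` solves the problem on `(-T(λ₀), T(λ₀))`, so
maximality gives `T(λ₀) ≤ Λ`. Since `T(u x) = x` for `0 < x < Λ`, `T(λ) → Λ` as `λ → ∞`, and
`Λ = ∫_h^∞ ds / r(s)`.
-/

open Set Filter Real MeasureTheory Topology

noncomputable def profileSlope (φ : ℝ → ℝ) (h l : ℝ) : ℝ :=
  √(exp (2 * (φ l - φ h)) - 1)

noncomputable def travelTime (φ : ℝ → ℝ) (h l : ℝ) : ℝ :=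
  ∫ s in h..l, (profileSlope φ h s)⁻¹

structure IsProfileSolution (φ' : ℝ → ℝ) (a h Λ : ℝ) (u u' : ℝ → ℝ) : Prop where
  hasDerivAt : ∀ x ∈ Ioo (-Λ) Λ, HasDerivAt u (u' x) x
  hasDerivAt_deriv : ∀ x ∈ Ioo (-Λ) Λ, HasDerivAt u' (φ' (u x) * (1 + u' x ^ 2)) x
  mem_Ioi : ∀ x ∈ Ioo (-Λ) Λ, u x ∈ Ioi a
  apply_zero : u 0 = h
  deriv_zero : u' 0 = 0

section profileSlope

variable {φ : ℝ → ℝ} {h l : ℝ}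

@[simp]
lemma profileSlope_self : profileSlope φ h h = 0 := by
  simp [profileSlope]

lemma profileSlope_pos (hφ : φ h < φ l) : 0 < profileSlope φ h l :=
  Real.sqrt_pos.2 <| sub_pos.2 <| one_lt_exp_iff.2 (by linarith)

lemma one_add_profileSlope_sq (hφ : φ h ≤ φ l) :
    1 + profileSlope φ h l ^ 2 = exp (2 * (φ l - φ h)) := by
  rw [profileSlope, Real.sq_sqrt (sub_nonneg.2 (one_le_exp (by linarith)))]
  ring

lemma profileSlope_eq_abs {y : ℝ} (hy : 1 + y ^ 2 = exp (2 * (φ l - φ h))) :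
    profileSlope φ h l = |y| := by
  rw [profileSlope, ← hy, add_sub_cancel_left, Real.sqrt_sq_eq_abs]

lemma continuousAt_profileSlope (hφ : ContinuousAt φ l) : ContinuousAt (profileSlope φ h) l := by
  unfold profileSlope
  fun_prop

lemma hasDerivAt_profileSlope {d : ℝ} (hφ : HasDerivAt φ d l) (hl : φ h < φ l) :
    HasDerivAt (profileSlope φ h) (d * (1 + profileSlope φ h l ^ 2) / profileSlope φ h l) l := by
  have hψ := (((hφ.sub_const (φ h)).const_mul 2).exp.sub_const 1).sqrt
    (Real.sqrt_pos.1 (profileSlope_pos hl)).ne'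
  refine hψ.congr_deriv ?_
  rw [one_add_profileSlope_sq hl.le, profileSlope]
  field_simp

end profileSlope

lemma strictMonoOn_of_hasDerivAt_pos {s : Set ℝ} (hs : Convex ℝ s) (hs' : IsOpen s)
    {f f' : ℝ → ℝ} (hf : ∀ x ∈ s, HasDerivAt f (f' x) x) (hf' : ∀ x ∈ s, 0 < f' x) :
    StrictMonoOn f s := by
  refine strictMonoOn_of_hasDerivWithinAt_pos (f' := f') hs
    (fun x hx => (hf x hx).continuousAt.continuousWithinAt) (fun x hx => ?_) (fun x hx => ?_)
  · rw [hs'.interior_eq] at hx ⊢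
    exact (hf x hx).hasDerivWithinAt
  · rw [hs'.interior_eq] at hx
    exact hf' x hx

section increasing

variable {a h l : ℝ} {φ φ' : ℝ → ℝ}
  (hφ : ∀ s ∈ Ioi a, HasDerivAt φ (φ' s) s) (hφpos : ∀ s ∈ Ioi a, 0 < φ' s)

include hφ hφpos

lemma profileSlope_pos_of_lt (hah : a < h) (hl : h < l) : 0 < profileSlope φ h l :=
  profileSlope_pos <|
    strictMonoOn_of_hasDerivAt_pos (convex_Ioi a) isOpen_Ioi hφ hφpos hah (hah.trans hl) hl

lemma continuousOn_inv_profileSlope (hah : a < h) :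
    ContinuousOn (fun l => (profileSlope φ h l)⁻¹) (Ioi h) := fun l hl =>
  ((continuousAt_profileSlope (hφ l (hah.trans hl)).continuousAt).inv₀
    (profileSlope_pos_of_lt hφ hφpos hah hl).ne').continuousWithinAt

end increasing

section travelTime

variable {a h l : ℝ} {φ φ' : ℝ → ℝ}
  (hφ : ∀ s ∈ Ioi a, HasDerivAt φ (φ' s) s) (hφpos : ∀ s ∈ Ioi a, 0 < φ' s) (hah : a < h)
  (hint : ∀ l > h, IntervalIntegrable (fun s => (profileSlope φ h s)⁻¹) volume h l)

@[simp]
lemma travelTime_self : travelTime φ h h = 0 :=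
  intervalIntegral.integral_same

include hint in
lemma continuousOn_travelTime : ContinuousOn (travelTime φ h) (Ici h) := fun l hl => by
  have hl' : h < l + 1 := by linarith [mem_Ici.1 hl]
  have hcont := intervalIntegral.continuousOn_primitive_interval' (hint (l + 1) hl') left_mem_uIcc
  rw [uIcc_of_le hl'.le, ← Ici_inter_Iic] at hcont
  exact (hcont l ⟨hl, (lt_add_one l).le⟩).mono_of_mem_nhdsWithin
    (inter_mem_nhdsWithin _ (Iic_mem_nhds (lt_add_one l)))

include hφ hφpos hah hint in
lemma hasDerivAt_travelTime (hl : h < l) :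
    HasDerivAt (travelTime φ h) (profileSlope φ h l)⁻¹ l :=
  intervalIntegral.integral_hasDerivAt_right (hint l hl)
    ((continuousOn_inv_profileSlope hφ hφpos hah).stronglyMeasurableAtFilter isOpen_Ioi l hl)
    ((continuousOn_inv_profileSlope hφ hφpos hah).continuousAt (Ioi_mem_nhds hl))

include hφ hφpos hah hint in
lemma strictMonoOn_travelTime : StrictMonoOn (travelTime φ h) (Ici h) := by
  refine strictMonoOn_of_hasDerivWithinAt_pos (f' := fun l => (profileSlope φ h l)⁻¹)
    (convex_Ici h) (continuousOn_travelTime hint)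
    (fun l hl => ?_) (fun l hl => ?_)
  · rw [interior_Ici] at hl ⊢
    exact (hasDerivAt_travelTime hφ hφpos hah hint hl).hasDerivWithinAt
  · rw [interior_Ici] at hl
    exact inv_pos.2 (profileSlope_pos_of_lt hφ hφpos hah hl)

end travelTime

noncomputable def travelTimeInv (φ : ℝ → ℝ) (h l₀ : ℝ) : ℝ → ℝ :=
  Function.invFunOn (travelTime φ h) (Icc h l₀)

section travelTimeInv

variable {a h l₀ y : ℝ} {φ φ' : ℝ → ℝ}
  (hφ : ∀ s ∈ Ioi a, HasDerivAt φ (φ' s) s) (hφpos : ∀ s ∈ Ioi a, 0 < φ' s) (hah : a < h)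
  (hint : ∀ l > h, IntervalIntegrable (fun s => (profileSlope φ h s)⁻¹) volume h l)
  (hl₀ : h ≤ l₀)
include hφ hφpos hah hint hl₀

lemma bijOn_travelTime :
    BijOn (travelTime φ h) (Icc h l₀) (Icc 0 (travelTime φ h l₀)) := by
  have hmono := (strictMonoOn_travelTime hφ hφpos hah hint).mono
    (Icc_subset_Ici_self : Icc h l₀ ⊆ Ici h)
  refine ⟨fun l hl => ?_, hmono.injOn, ?_⟩
  · rw [← travelTime_self (φ := φ) (h := h)]
    exact ⟨hmono.monotoneOn (left_mem_Icc.2 hl₀) hl hl.1,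
      hmono.monotoneOn hl (right_mem_Icc.2 hl₀) hl.2⟩
  · simpa [SurjOn] using intermediate_value_Icc hl₀
      ((continuousOn_travelTime hint).mono Icc_subset_Ici_self)

lemma invOn_travelTimeInv :
    InvOn (travelTimeInv φ h l₀) (travelTime φ h) (Icc h l₀) (Icc 0 (travelTime φ h l₀)) :=
  (bijOn_travelTime hφ hφpos hah hint hl₀).invOn_invFunOn

lemma mapsTo_travelTimeInv :
    MapsTo (travelTimeInv φ h l₀) (Icc 0 (travelTime φ h l₀)) (Icc h l₀) :=
  (bijOn_travelTime hφ hφpos hah hint hl₀).surjOn.mapsTo_invFunOn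

lemma travelTimeInv_mem_Ioo (hy : y ∈ Ioo 0 (travelTime φ h l₀)) :
    travelTimeInv φ h l₀ y ∈ Ioo h l₀ := by
  have hmem := mapsTo_travelTimeInv hφ hφpos hah hint hl₀ (Ioo_subset_Icc_self hy)
  have hG := (invOn_travelTimeInv hφ hφpos hah hint hl₀).2 (Ioo_subset_Icc_self hy)
  refine ⟨hmem.1.lt_of_ne ?_, hmem.2.lt_of_ne ?_⟩ <;> rintro hW
  · rw [← hW, travelTime_self] at hG
    exact hy.1.ne hG
  · rw [hW] at hG
    exact hy.2.ne' hG

lemma continuousAt_travelTimeInv (hy : y ∈ Ioo 0 (travelTime φ h l₀)) :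
    ContinuousAt (travelTimeInv φ h l₀) y := by
  have hbij := bijOn_travelTime hφ hφpos hah hint hl₀
  have hinv := invOn_travelTimeInv hφ hφpos hah hint hl₀
  have hmaps := mapsTo_travelTimeInv hφ hφpos hah hint hl₀
  have hmono : MonotoneOn (travelTimeInv φ h l₀) (Icc 0 (travelTime φ h l₀)) := by
    intro y₁ hy₁ y₂ hy₂ hle
    by_contra! hlt
    have := (strictMonoOn_travelTime hφ hφpos hah hint) (Icc_subset_Ici_self (hmaps hy₂))
      (Icc_subset_Ici_self (hmaps hy₁)) hlt
    rw [hinv.2 hy₁, hinv.2 hy₂] at this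
    exact this.not_ge hle
  refine continuousAt_of_monotoneOn_of_image_mem_nhds hmono (Icc_mem_nhds hy.1 hy.2) ?_
  rw [(hbij.symm hinv.symm).image_eq]
  have := travelTimeInv_mem_Ioo hφ hφpos hah hint hl₀ hy
  exact Icc_mem_nhds this.1 this.2

lemma hasDerivAt_travelTimeInv (hy : y ∈ Ioo 0 (travelTime φ h l₀)) :
    HasDerivAt (travelTimeInv φ h l₀) (profileSlope φ h (travelTimeInv φ h l₀ y)) y := by
  have hW := travelTimeInv_mem_Ioo hφ hφpos hah hint hl₀ hy
  have hinv := invOn_travelTimeInv hφ hφpos hah hint hl₀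
  simpa using (hasDerivAt_travelTime hφ hφpos hah hint hW.1).of_local_left_inverse
    (continuousAt_travelTimeInv hφ hφpos hah hint hl₀ hy)
    (inv_ne_zero (profileSlope_pos_of_lt hφ hφpos hah hW.1).ne')
    (eventually_of_mem (Ioo_mem_nhds hy.1 hy.2) fun z hz => hinv.2 (Ioo_subset_Icc_self hz))

lemma hasDerivAt_profileSlope_travelTimeInv (hy : y ∈ Ioo 0 (travelTime φ h l₀)) :
    HasDerivAt (fun z => profileSlope φ h (travelTimeInv φ h l₀ z))
      (φ' (travelTimeInv φ h l₀ y) * (1 + profileSlope φ h (travelTimeInv φ h l₀ y) ^ 2)) y := by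
  have hW := travelTimeInv_mem_Ioo hφ hφpos hah hint hl₀ hy
  refine ((hasDerivAt_profileSlope (hφ _ (hah.trans hW.1))
    (strictMonoOn_of_hasDerivAt_pos (convex_Ioi a) isOpen_Ioi hφ hφpos hah (hah.trans hW.1)
      hW.1)).comp y (hasDerivAt_travelTimeInv hφ hφpos hah hint hl₀ hy)).congr_deriv ?_
  field_simp [(profileSlope_pos_of_lt hφ hφpos hah hW.1).ne']

end travelTimeInv

namespace IsProfileSolution

variable {a h Λ x l₀ : ℝ} {φ φ' u u' : ℝ → ℝ} (hs : IsProfileSolution φ' a h Λ u u')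
  (hφ : ∀ s ∈ Ioi a, HasDerivAt φ (φ' s) s) (hφpos : ∀ s ∈ Ioi a, 0 < φ' s)
include hs

lemma lt_center (hΛ : 0 < Λ) : a < h :=
  hs.apply_zero ▸ hs.mem_Ioi 0 ⟨neg_lt_zero.2 hΛ, hΛ⟩

include hφ in
/-- Conservation of `log (1 + u'²) - 2 φ(u)`. -/
lemma energy (hx : x ∈ Ioo (-Λ) Λ) :
    1 + u' x ^ 2 = exp (2 * (φ (u x) - φ h)) := by
  set E := fun y => Real.log (1 + u' y ^ 2) - 2 * φ (u y)
  have hE : ∀ y ∈ Ioo (-Λ) Λ, HasDerivAt E 0 y := by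
    intro y hy
    have h₁ := (((hs.hasDerivAt_deriv y hy).pow 2).const_add 1).log
      (by positivity : (0 : ℝ) < 1 + u' y ^ 2).ne'
    have h₂ := ((hφ _ (hs.mem_Ioi y hy)).comp y (hs.hasDerivAt y hy)).const_mul 2
    refine (h₁.sub h₂).congr_deriv ?_
    simp only [Pi.pow_apply]
    field_simp
    ring
  have hE0 := isOpen_Ioo.is_const_of_deriv_eq_zero isPreconnected_Ioo
    (fun y hy => (hE y hy).differentiableAt.differentiableWithinAt) (fun y hy => (hE y hy).deriv)
    hx (y := 0) ⟨by linarith [hx.1, hx.2], by linarith [hx.1, hx.2]⟩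
  simp only [E, hs.apply_zero, hs.deriv_zero] at hE0
  rw [← exp_log (by positivity : (0 : ℝ) < 1 + u' x ^ 2)]
  congr 1
  norm_num at hE0
  linarith

include hφpos in
lemma strictMonoOn_deriv : StrictMonoOn u' (Ioo (-Λ) Λ) :=
  strictMonoOn_of_hasDerivAt_pos (convex_Ioo _ _) isOpen_Ioo hs.hasDerivAt_deriv fun x hx => by
    have := hφpos _ (hs.mem_Ioi x hx)
    positivity

include hφpos in
lemma sign_deriv (hx : x ∈ Ioo (-Λ) Λ) : SignType.sign (u' x) = SignType.sign x := by
  have h0 : (0 : ℝ) ∈ Ioo (-Λ) Λ := ⟨by linarith [hx.1, hx.2], by linarith [hx.1, hx.2]⟩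
  have hmono := hs.strictMonoOn_deriv hφpos
  rcases lt_trichotomy x 0 with hneg | rfl | hpos
  · have := hmono hx h0 hneg
    rw [hs.deriv_zero] at this
    simp [this, hneg]
  · simp [hs.deriv_zero]
  · have := hmono h0 hx hpos
    rw [hs.deriv_zero] at this
    simp [sign_pos, this, hpos]

include hφ hφpos in
lemma deriv_eq_sign_mul_profileSlope (hx : x ∈ Ioo (-Λ) Λ) :
    u' x = SignType.sign x * profileSlope φ h (u x) := by
  rw [profileSlope_eq_abs (hs.energy hφ hx), ← hs.sign_deriv hφpos hx, sign_mul_abs]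

include hφ hφpos in
lemma lt_apply (hx : x ∈ Ioo (-Λ) Λ) (hx0 : x ≠ 0) : h < u x := by
  have hu' : u' x ≠ 0 := by
    rw [← sign_ne_zero, hs.sign_deriv hφpos hx, sign_ne_zero]
    exact hx0
  have hφu : φ h < φ (u x) := by
    have := hs.energy hφ hx
    have : 1 < exp (2 * (φ (u x) - φ h)) := by
      rw [← this]
      linarith [pow_two_pos_of_ne_zero hu']
    linarith [one_lt_exp_iff.1 this]
  have hΛ : 0 < Λ := by linarith [hx.1, hx.2]
  exact ((strictMonoOn_of_hasDerivAt_pos (convex_Ioi a) isOpen_Ioi hφ hφpos).lt_iff_lt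
    (hs.lt_center hΛ) (hs.mem_Ioi x hx)).1 hφu

include hφ hφpos in
/-- The change of variables `λ = u(t)` turns `∫₀ˣ dt` into the travel time to `u x`. -/
lemma intervalIntegrable_and_travelTime_apply (hx : x ∈ Ioo 0 Λ) :
    IntervalIntegrable (fun l => (profileSlope φ h l)⁻¹) volume h (u x) ∧
      travelTime φ h (u x) = x := by
  have hIcc : Icc 0 x ⊆ Ioo (-Λ) Λ := fun t ht =>
    ⟨by linarith [ht.1, hx.1, hx.2], by linarith [ht.2, hx.2]⟩
  have hcont : ContinuousOn u (Icc 0 x) := fun t ht =>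
    (hs.hasDerivAt t (hIcc ht)).continuousAt.continuousWithinAt
  have hderiv : ∀ t ∈ Ioo 0 x, HasDerivAt u (u' t) t := fun t ht =>
    hs.hasDerivAt t (hIcc (Ioo_subset_Icc_self ht))
  have hslope : ∀ t ∈ Ioo 0 x, u' t = profileSlope φ h (u t) := fun t ht => by
    rw [hs.deriv_eq_sign_mul_profileSlope hφ hφpos (hIcc (Ioo_subset_Icc_self ht)), sign_pos ht.1,
      SignType.coe_one, one_mul]
  have hpos : ∀ t ∈ Ioo 0 x, 0 < u' t := fun t ht => by
    have := hs.strictMonoOn_deriv hφpos (hIcc (left_mem_Icc.2 hx.1.le))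
      (hIcc (Ioo_subset_Icc_self ht)) ht.1
    rwa [hs.deriv_zero] at this
  have hone : EqOn (fun t => u' t • (profileSlope φ h (u t))⁻¹) 1 (Ioo 0 x) := fun t ht => by
    simp only [smul_eq_mul, Pi.one_apply, ← hslope t ht]
    exact mul_inv_cancel₀ (hpos t ht).ne'
  have hint : IntegrableOn (fun t => u' t • (profileSlope φ h (u t))⁻¹) (Icc 0 x) := by
    rw [integrableOn_Icc_iff_integrableOn_Ioo]
    exact (integrableOn_const measure_Ioo_lt_top.ne).congr_fun hone.symm measurableSet_Ioo
  have hux : h ≤ u x := (hs.lt_apply hφ hφpos (hIcc (right_mem_Icc.2 hx.1.le)) hx.1.ne').le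
  have hiff := integrableOn_Icc_deriv_smul_iff_of_deriv_nonneg
    (g := fun l => (profileSlope φ h l)⁻¹) hcont hderiv (fun t ht => (hpos t ht).le) hx.1.le
  have hcov := integral_Icc_deriv_smul_of_deriv_nonneg
    (g := fun l => (profileSlope φ h l)⁻¹) hcont hderiv (fun t ht => (hpos t ht).le) hx.1.le
  rw [hs.apply_zero] at hiff hcov
  refine ⟨(intervalIntegrable_iff_integrableOn_Icc_of_le hux).2 (hiff.1 hint), ?_⟩
  rw [travelTime, intervalIntegral.integral_of_le hux, ← integral_Icc_eq_integral_Ioc, ← hcov,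
    integral_Icc_eq_integral_Ioo, setIntegral_congr_fun measurableSet_Ioo hone]
  simp [hx.1.le]

lemma comp_neg : IsProfileSolution φ' a h Λ (fun x => u (-x)) (fun x => -u' (-x)) where
  hasDerivAt x hx :=
    ((hs.hasDerivAt (-x) ⟨by linarith [hx.2], by linarith [hx.1]⟩).comp x
      (hasDerivAt_neg x)).congr_deriv (by ring)
  hasDerivAt_deriv x hx :=
    ((hs.hasDerivAt_deriv (-x) ⟨by linarith [hx.2], by linarith [hx.1]⟩).comp x
      (hasDerivAt_neg x)).neg.congr_deriv (by ring)
  mem_Ioi x hx := hs.mem_Ioi (-x) ⟨by linarith [hx.2], by linarith [hx.1]⟩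
  apply_zero := by simpa using hs.apply_zero
  deriv_zero := by simpa using hs.deriv_zero

include hφ hφpos

lemma travelTime_apply_eq_abs (hx : x ∈ Ioo (-Λ) Λ) : travelTime φ h (u x) = |x| := by
  rcases lt_trichotomy x 0 with hneg | rfl | hpos
  · simpa [abs_of_neg hneg] using (hs.comp_neg.intervalIntegrable_and_travelTime_apply hφ hφpos
      (x := -x) ⟨by linarith, by linarith [hx.1]⟩).2
  · simp [hs.apply_zero]
  · simpa [abs_of_pos hpos] using
      (hs.intervalIntegrable_and_travelTime_apply hφ hφpos ⟨hpos, hx.2⟩).2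

lemma intervalIntegrable_inv_profileSlope (hΛ : 0 < Λ) :
    ∀ l > h, IntervalIntegrable (fun s => (profileSlope φ h s)⁻¹) volume h l := by
  intro l hl
  have hx : Λ / 2 ∈ Ioo 0 Λ := ⟨by linarith, by linarith⟩
  have hux := hs.lt_apply hφ hφpos ⟨by linarith, hx.2⟩ hx.1.ne'
  refine (hs.intervalIntegrable_and_travelTime_apply hφ hφpos hx).1.trans ?_
  exact ((continuousOn_inv_profileSlope hφ hφpos (hs.lt_center hΛ)).mono
    fun s hs => (lt_min hux hl).trans_le hs.1).intervalIntegrable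

lemma eventuallyEq_travelTimeInv_abs (hΛ : 0 < Λ) (hl₀ : h < l₀) :
    (fun x => travelTimeInv φ h l₀ |x|) =ᶠ[𝓝 0] u := by
  have hah := hs.lt_center hΛ
  have hint := hs.intervalIntegrable_inv_profileSlope hφ hφpos hΛ
  have hmono := strictMonoOn_travelTime hφ hφpos hah hint
  have hG : 0 < travelTime φ h l₀ := by
    simpa using hmono (mem_Ici.2 le_rfl) hl₀.le hl₀
  filter_upwards [Ioo_mem_nhds (neg_neg_of_pos hΛ) hΛ, Ioo_mem_nhds (neg_neg_of_pos hG) hG]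
    with x hx hxG
  have hhu : h ≤ u x := by
    rcases eq_or_ne x 0 with rfl | hx0
    · exact hs.apply_zero.ge
    · exact (hs.lt_apply hφ hφpos hx hx0).le
  have hul₀ : u x ≤ l₀ := by
    by_contra! hlt
    have := hmono (mem_Ici.2 hl₀.le) (mem_Ici.2 hhu) hlt
    rw [hs.travelTime_apply_eq_abs hφ hφpos hx] at this
    exact (abs_lt.2 hxG).not_gt this
  rw [← hs.travelTime_apply_eq_abs hφ hφpos hx]
  exact (invOn_travelTimeInv hφ hφpos hah hint hl₀.le).1 ⟨hhu, hul₀⟩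

/-- Near `0` this solution coincides with `u`, which provides its derivatives there. -/
lemma extend (hΛ : 0 < Λ) (hl₀ : h < l₀) :
    IsProfileSolution φ' a h (travelTime φ h l₀) (fun x => travelTimeInv φ h l₀ |x|)
      (fun x => SignType.sign x * profileSlope φ h (travelTimeInv φ h l₀ |x|)) := by
  have hah := hs.lt_center hΛ
  have hint := hs.intervalIntegrable_inv_profileSlope hφ hφpos hΛ
  have hv := hs.eventuallyEq_travelTimeInv_abs hφ hφpos hΛ hl₀
  have hv' : (fun x => SignType.sign x * profileSlope φ h (travelTimeInv φ h l₀ |x|)) =ᶠ[𝓝 0]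
      u' := by
    filter_upwards [hv, Ioo_mem_nhds (neg_neg_of_pos hΛ) hΛ] with x hx hxΛ
    rw [hx, hs.deriv_eq_sign_mul_profileSlope hφ hφpos hxΛ]
  have h0 : (0 : ℝ) ∈ Ioo (-Λ) Λ := ⟨neg_neg_of_pos hΛ, hΛ⟩
  have habs : ∀ x ∈ Ioo (-travelTime φ h l₀) (travelTime φ h l₀), x ≠ 0 →
      |x| ∈ Ioo 0 (travelTime φ h l₀) := fun x hx hx0 => ⟨abs_pos.2 hx0, abs_lt.2 hx⟩
  refine ⟨fun x hx => ?_, fun x hx => ?_, fun x hx => ?_, ?_, by simp⟩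
  · rcases eq_or_ne x 0 with rfl | hx0
    · exact ((hs.hasDerivAt 0 h0).congr_of_eventuallyEq hv).congr_deriv hv'.eq_of_nhds.symm
    · exact ((hasDerivAt_travelTimeInv hφ hφpos hah hint hl₀.le (habs x hx hx0)).comp x
        (hasDerivAt_abs hx0)).congr_deriv (mul_comm _ _)
  · rcases eq_or_ne x 0 with rfl | hx0
    · refine ((hs.hasDerivAt_deriv 0 h0).congr_of_eventuallyEq hv').congr_deriv ?_
      rw [hv.eq_of_nhds]
      simp [hs.deriv_zero]
    · have hsign : ∀ᶠ z in 𝓝 x, SignType.sign z = SignType.sign x :=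
        continuousAt_sign_of_ne_zero hx0 ((isOpen_discrete {SignType.sign x}).mem_nhds rfl)
      have hsq : (SignType.sign x : ℝ) ^ 2 = 1 := by
        rcases hx0.lt_or_gt with hx0 | hx0 <;> simp [hx0]
      refine ((((hasDerivAt_profileSlope_travelTimeInv hφ hφpos hah hint hl₀.le
        (habs x hx hx0)).comp x (hasDerivAt_abs hx0)).const_mul (SignType.sign x : ℝ)
        ).congr_of_eventuallyEq ?_).congr_deriv ?_
      · filter_upwards [hsign] with z hz
        simp [hz]
      · linear_combination (φ' (travelTimeInv φ h l₀ |x|)) * hsq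
  · exact hah.trans_le
      (mapsTo_travelTimeInv hφ hφpos hah hint hl₀.le ⟨abs_nonneg x, (abs_lt.2 hx).le⟩).1
  · simpa using (invOn_travelTimeInv hφ hφpos hah hint hl₀.le).1 (left_mem_Icc.2 hl₀.le)

lemma tendsto_travelTime (hΛ : 0 < Λ) (hle : ∀ l > h, travelTime φ h l ≤ Λ) :
    Tendsto (travelTime φ h) atTop (𝓝 Λ) := by
  have hmono := strictMonoOn_travelTime hφ hφpos (hs.lt_center hΛ)
    (hs.intervalIntegrable_inv_profileSlope hφ hφpos hΛ)
  refine tendsto_order.2 ⟨fun b hb => ?_, fun b hb => ?_⟩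
  · obtain ⟨x, hbx, hxΛ⟩ := exists_between (max_lt hb hΛ)
    have hx : x ∈ Ioo 0 Λ := ⟨(le_max_right _ _).trans_lt hbx, hxΛ⟩
    have hux := (hs.lt_apply hφ hφpos ⟨by linarith [hx.1], hx.2⟩ hx.1.ne').le
    filter_upwards [eventually_ge_atTop (u x)] with l hl
    calc b < x := (le_max_left _ _).trans_lt hbx
      _ = travelTime φ h (u x) := (hs.intervalIntegrable_and_travelTime_apply hφ hφpos hx).2.symm
      _ ≤ travelTime φ h l := hmono.monotoneOn hux (hux.trans hl) hl
  · filter_upwards [eventually_gt_atTop h] with l hl using (hle l hl).trans_lt hb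

end IsProfileSolution

theorem stmt16_general (a h Λ : ℝ) (hΛ : 0 < Λ)
    (φ φ' u u' : ℝ → ℝ)
    (hφ : ∀ s ∈ Ioi a, HasDerivAt φ (φ' s) s)
    (hφpos : ∀ s ∈ Ioi a, 0 < φ' s)
    (hu : ∀ x ∈ Ioo (-Λ) Λ, HasDerivAt u (u' x) x)
    (hode : ∀ x ∈ Ioo (-Λ) Λ, HasDerivAt u' (φ' (u x) * (1 + u' x ^ 2)) x)
    (hrange : ∀ x ∈ Ioo (-Λ) Λ, u x ∈ Ioi a)
    (hu0 : u 0 = h) (hu'0 : u' 0 = 0)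
    (hmax : ∀ Λ' : ℝ, Λ < Λ' →
      ¬ ∃ v v' : ℝ → ℝ,
          (∀ x ∈ Ioo (-Λ') Λ', HasDerivAt v (v' x) x) ∧
          (∀ x ∈ Ioo (-Λ') Λ', HasDerivAt v' (φ' (v x) * (1 + v' x ^ 2)) x) ∧
          (∀ x ∈ Ioo (-Λ') Λ', v x ∈ Ioi a) ∧ v 0 = h ∧ v' 0 = 0) :
    Λ = ∫ l in Ioi h, (Real.sqrt (Real.exp (2 * (φ l - φ h)) - 1))⁻¹ := by
  have hs : IsProfileSolution φ' a h Λ u u' := ⟨hu, hode, hrange, hu0, hu'0⟩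
  have hah := hs.lt_center hΛ
  have hint := hs.intervalIntegrable_inv_profileSlope hφ hφpos hΛ
  have hle : ∀ l > h, travelTime φ h l ≤ Λ := fun l hl => by
    by_contra! hlt
    have hv := hs.extend hφ hφpos hΛ hl
    exact hmax _ hlt ⟨_, _, hv.hasDerivAt, hv.hasDerivAt_deriv, hv.mem_Ioi, hv.apply_zero,
      hv.deriv_zero⟩
  have hΛ_eq := integral_Ioi_of_hasDerivAt_of_nonneg
    ((continuousOn_travelTime hint) h (mem_Ici.2 le_rfl))
    (fun l hl => hasDerivAt_travelTime hφ hφpos hah hint hl)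
    (fun l _ => inv_nonneg.2 (Real.sqrt_nonneg _)) (hs.tendsto_travelTime hφ hφpos hΛ hle)
  rw [travelTime_self, sub_zero] at hΛ_eq
  exact hΛ_eq.symm

/-- Explicit formula for the finite half-period: for `φ` C¹, strictly
increasing, unbounded above, with `e^{−φ}` integrable on `(h,∞)`, the maximal
solution of `u'' = φ'(u)(1+(u')²)`, `u 0 = h`, `u' 0 = 0` has maximal interval
`(−Λ_h, Λ_h)` with `Λ_h = ∫_h^∞ (e^{2(φ(λ)−φ(h))} − 1)^{−1/2} dλ`. -/
theorem stmt16 (a h Λ : ℝ) (hΛ : 0 < Λ) (ha : a < h)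
    (φ φ' u u' : ℝ → ℝ)
    (hφ : ∀ s ∈ Ioi a, HasDerivAt φ (φ' s) s)
    (hφc : ContinuousOn φ' (Ioi a))
    (hφpos : ∀ s ∈ Ioi a, 0 < φ' s)
    (htop : Tendsto φ atTop atTop)
    (hint : MeasureTheory.IntegrableOn (fun t => Real.exp (-φ t)) (Ioi h))
    (hu : ∀ x ∈ Ioo (-Λ) Λ, HasDerivAt u (u' x) x)
    (hode : ∀ x ∈ Ioo (-Λ) Λ, HasDerivAt u' (φ' (u x) * (1 + u' x ^ 2)) x)
    (hrange : ∀ x ∈ Ioo (-Λ) Λ, u x ∈ Ioi a)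
    (hu0 : u 0 = h) (hu'0 : u' 0 = 0)
    (hmax : ∀ Λ' : ℝ, Λ < Λ' →
      ¬ ∃ v v' : ℝ → ℝ,
          (∀ x ∈ Ioo (-Λ') Λ', HasDerivAt v (v' x) x) ∧
          (∀ x ∈ Ioo (-Λ') Λ', HasDerivAt v' (φ' (v x) * (1 + v' x ^ 2)) x) ∧
          (∀ x ∈ Ioo (-Λ') Λ', v x ∈ Ioi a) ∧ v 0 = h ∧ v' 0 = 0) :
    Λ = ∫ l in Ioi h, (Real.sqrt (Real.exp (2 * (φ l - φ h)) - 1))⁻¹ :=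
  stmt16_general a h Λ hΛ φ φ' u u' hφ hφpos hu hode hrange hu0 hu'0 hmax
end

section
/- Let φ : (a,∞) → ℝ be C¹ strictly increasing with φ unbounded above, and suppose φ' is bounded above by M on (h,∞). Then the maximal solution of u''=φ'(u)(1+(u')²), u(0)=h, u'(0)=0 has infinite maximal interval, i.e. Λ_h = ∞. -/
/-!
With `u(0) = h`, `u'(0) = 0`, the first integral `(1 + u'²) e^{-2φ(u)} = e^{-2φ(h)}` reduces the
equation to the autonomous first-order equation `u' = f(u)`, `f(y) = √(e^{2(φ(y) - φ(h))} - 1)`,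
for `x ≥ 0`. Since `φ' > 0` near `h`, `f` grows at least like `√(y - h)`, so `1/f` is integrable
at `h` and the time map `T(y) = ∫_h^y dt / f(t)` is finite; since `1/f ≥ e^{φ(h)} e^{-φ}`, the
non-integrability of `e^{-φ}` makes `T` unbounded. Hence `u = T⁻¹` exists for all `x ≥ 0`, and its
even extension solves the second-order equation on all of `ℝ`.
-/

open Set Filter Real
open Topology MeasureTheory

section Primitive

variable {g : ℝ → ℝ} {h : ℝ}

theorem intervalIntegrable_of_forall_integrableOn_Ioc (hg : ∀ b, IntegrableOn g (Ioc h b))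
    {b c : ℝ} (hb : h ≤ b) (hc : h ≤ c) : IntervalIntegrable g volume b c :=
  intervalIntegrable_iff.2 <| (hg (max b c)).mono_set <| Ioc_subset_Ioc_left (le_min hb hc)

theorem hasDerivAt_primitive_of_continuousOn (hg : ∀ b, IntegrableOn g (Ioc h b))
    (hc : ContinuousOn g (Ioi h)) {y : ℝ} (hy : h < y) :
    HasDerivAt (fun y => ∫ t in h..y, g t) (g y) y :=
  intervalIntegral.integral_hasDerivAt_right
    (intervalIntegrable_of_forall_integrableOn_Ioc hg le_rfl hy.le)
    (hc.stronglyMeasurableAtFilter isOpen_Ioi y hy) (hc.continuousAt (Ioi_mem_nhds hy))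

theorem strictMonoOn_primitive (hg : ∀ b, IntegrableOn g (Ioc h b))
    (hpos : ∀ t ∈ Ioi h, 0 < g t) : StrictMonoOn (fun y => ∫ t in h..y, g t) (Ici h) := by
  intro x (hx : h ≤ x) y (hy : h ≤ y) hxy
  dsimp only
  rw [← intervalIntegral.integral_add_adjacent_intervals
    (intervalIntegrable_of_forall_integrableOn_Ioc hg le_rfl hx)
    (intervalIntegrable_of_forall_integrableOn_Ioc hg hx hy), lt_add_iff_pos_right]
  exact intervalIntegral.intervalIntegral_pos_of_pos_on
    (intervalIntegrable_of_forall_integrableOn_Ioc hg hx hy)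
    (fun t ht => hpos t (hx.trans_lt ht.1)) hxy

theorem exists_lt_intervalIntegral_of_not_integrableOn_Ioi (hg : ∀ b, IntegrableOn g (Ioc h b))
    (hnn : ∀ t ∈ Ioi h, 0 ≤ g t) (hni : ¬ IntegrableOn g (Ioi h)) (C : ℝ) :
    ∃ b, h ≤ b ∧ C < ∫ t in h..b, g t := by
  by_contra! hC
  refine hni (integrableOn_Ioi_of_intervalIntegral_norm_bounded C h hg tendsto_id ?_)
  filter_upwards [eventually_ge_atTop h] with b hb
  calc ∫ t in h..b, ‖g t‖ = ∫ t in h..b, g t :=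
        intervalIntegral.integral_congr_ae <| Eventually.of_forall fun t ht =>
          Real.norm_of_nonneg (hnn t (by rw [uIoc_of_le hb] at ht; exact ht.1))
    _ ≤ C := hC b hb

theorem surjOn_primitive (hg : ∀ b, IntegrableOn g (Ioc h b)) (hnn : ∀ t ∈ Ioi h, 0 ≤ g t)
    (hni : ¬ IntegrableOn g (Ioi h)) :
    SurjOn (fun y => ∫ t in h..y, g t) (Ici h) (Ici 0) := by
  intro x (hx : 0 ≤ x)
  obtain ⟨b, hb, hxb⟩ := exists_lt_intervalIntegral_of_not_integrableOn_Ioi hg hnn hni x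
  have hcont : ContinuousOn (fun y => ∫ t in h..y, g t) (Icc h b) := by
    simpa [uIcc_of_le hb] using intervalIntegral.continuousOn_primitive_interval'
      (intervalIntegrable_of_forall_integrableOn_Ioc hg le_rfl hb) left_mem_uIcc
  obtain ⟨y, hy, hyx⟩ := intermediate_value_Icc hb hcont ⟨by simpa using hx, hxb.le⟩
  exact ⟨y, hy.1, hyx⟩

end Primitive

theorem exists_solution_of_not_integrableOn_inv {f : ℝ → ℝ} {h : ℝ}
    (hf : ContinuousOn f (Ioi h)) (hpos : ∀ y ∈ Ioi h, 0 < f y)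
    (hint : ∀ b, IntegrableOn (fun y => (f y)⁻¹) (Ioc h b))
    (hdiv : ¬ IntegrableOn (fun y => (f y)⁻¹) (Ioi h)) :
    ∃ ψ : ℝ → ℝ, ψ 0 = h ∧ ContinuousWithinAt ψ (Ici 0) 0 ∧
      ∀ x ∈ Ioi 0, h < ψ x ∧ HasDerivAt ψ (f (ψ x)) x := by
  set T : ℝ → ℝ := fun y => ∫ t in h..y, (f t)⁻¹
  have hg : ∀ t ∈ Ioi h, 0 < (f t)⁻¹ := fun t ht => inv_pos.2 (hpos t ht)
  have hT : StrictMonoOn T (Ici h) := strictMonoOn_primitive hint hg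
  have hbij : BijOn T (Ici h) (Ici 0) := by
    refine ⟨fun y hy => ?_, hT.injOn, surjOn_primitive hint (fun t ht => (hg t ht).le) hdiv⟩
    simpa [T] using hT.monotoneOn self_mem_Ici hy hy
  set ψ := Function.invFunOn T (Ici h)
  have hinv : InvOn ψ T (Ici h) (Ici 0) := hbij.invOn_invFunOn
  have hψbij : BijOn ψ (Ici 0) (Ici h) := hbij.symm hinv.symm
  have hψ : StrictMonoOn ψ (Ici 0) := fun x hx y hy hxy =>
    (hT.lt_iff_lt (hψbij.mapsTo hx) (hψbij.mapsTo hy)).1 (by rwa [hinv.2 hx, hinv.2 hy])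
  have hψ0 : ψ 0 = h := hbij.injOn (hψbij.mapsTo self_mem_Ici) self_mem_Ici <| by
    rw [hinv.2 self_mem_Ici]; simp [T]
  have hψh : ∀ x ∈ Ioi 0, h < ψ x := fun x hx =>
    hψ0 ▸ hψ self_mem_Ici (mem_Ici.2 (le_of_lt hx)) hx
  refine ⟨ψ, hψ0, ?_, fun x hx => ⟨hψh x hx, ?_⟩⟩
  · refine hψ.continuousWithinAt_right_of_image_mem_nhdsWithin self_mem_nhdsWithin ?_
    rw [hψbij.image_eq, hψ0]
    exact self_mem_nhdsWithin
  · have hcont : ContinuousAt ψ x := hψ.continuousAt_of_image_mem_nhds (Ici_mem_nhds hx) <| by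
      rw [hψbij.image_eq]; exact Ici_mem_nhds (hψh x hx)
    have hTd : HasDerivAt T (f (ψ x))⁻¹ (ψ x) :=
      hasDerivAt_primitive_of_continuousOn hint (hf.inv₀ fun t ht => (hpos t ht).ne') (hψh x hx)
    simpa using hTd.of_local_left_inverse hcont (inv_ne_zero (hpos _ (hψh x hx)).ne') <|
      eventually_of_mem (Ioi_mem_nhds hx) fun y hy => hinv.2 (mem_Ici.2 (le_of_lt hy))

theorem exists_even_solution {ψ f f' k : ℝ → ℝ} {h : ℝ} (hψ0 : ψ 0 = h)
    (hψc : ContinuousWithinAt ψ (Ici 0) 0)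
    (hψ : ∀ x ∈ Ioi 0, h < ψ x ∧ HasDerivAt ψ (f (ψ x)) x) (hfh : f h = 0)
    (hfc : ContinuousWithinAt f (Ici h) h) (hf' : ∀ y ∈ Ioi h, HasDerivAt f (f' y) y)
    (hk : ∀ y ∈ Ioi h, f y * f' y = k y) (hkc : ContinuousWithinAt k (Ici h) h) :
    ∃ u v : ℝ → ℝ, (∀ x, HasDerivAt u (v x) x) ∧ (∀ x, HasDerivAt v (k (u x)) x) ∧
      (∀ x, h ≤ u x ∧ v x ^ 2 = f (u x) ^ 2) ∧ u 0 = h ∧ v 0 = 0 := by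
  set u : ℝ → ℝ := fun x => ψ |x|
  set v : ℝ → ℝ := fun x => if 0 ≤ x then f (ψ x) else -f (ψ (-x))
  have hu0 : u 0 = h := by simp [u, hψ0]
  have hv0 : v 0 = 0 := by simp [v, hψ0, hfh]
  have hu_ge : ∀ x, h ≤ u x := fun x => by
    rcases (abs_nonneg x).eq_or_lt with hx | hx
    · simp [u, ← hx, hψ0]
    · exact (hψ _ hx).1.le
  have hu_even : ∀ x, u (-x) = u x := fun x => by simp [u]
  have hv_odd : ∀ x, v (-x) = -v x := fun x => by
    rcases lt_trichotomy x 0 with hx | rfl | hx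
    · simp [v, hx.le, hx.not_ge]
    · simp [hv0]
    · simp [v, hx.le, hx.not_ge]
  have hv_abs : ∀ x, |v x| = |f (u x)| := fun x => by
    rcases le_or_gt 0 x with hx | hx
    · simp [u, v, hx, abs_of_nonneg hx]
    · simp [u, v, hx.not_ge, abs_of_neg hx]
  have hderiv_pos : ∀ x ∈ Ioi 0, HasDerivAt u (v x) x ∧ HasDerivAt v (k (u x)) x := by
    intro x (hx : 0 < x)
    have hux : u x = ψ x := by simp [u, abs_of_pos hx]
    have hvx : v x = f (ψ x) := by simp [v, hx.le]
    have hu : u =ᶠ[𝓝 x] ψ := eventually_of_mem (Ioi_mem_nhds hx) fun y hy => by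
      simp [u, abs_of_pos (mem_Ioi.1 hy)]
    have hv : v =ᶠ[𝓝 x] fun y => f (ψ y) := eventually_of_mem (Ioi_mem_nhds hx) fun y hy => by
      simp [v, (mem_Ioi.1 hy).le]
    have hfψ := (hf' _ (hψ x hx).1).comp x (hψ x hx).2
    rw [mul_comm, hk _ (hψ x hx).1] at hfψ
    exact ⟨hvx ▸ (hψ x hx).2.congr_of_eventuallyEq hu, hux ▸ hfψ.congr_of_eventuallyEq hv⟩
  have hderiv_ne : ∀ x ≠ 0, HasDerivAt u (v x) x ∧ HasDerivAt v (k (u x)) x := by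
    intro x hx
    rcases hx.lt_or_gt with hx | hx
    · obtain ⟨hu, hv⟩ := hderiv_pos (-x) (neg_pos.2 hx)
      have hu' := hu.comp x (hasDerivAt_neg x)
      have hv' := hv.comp x (hasDerivAt_neg x)
      simp only [Function.comp_def, hu_even, hv_odd] at hu' hv'
      exact ⟨by simpa using hu', by simpa [Pi.neg_def] using hv'.neg⟩
    · exact hderiv_pos x hx
  have hu_mem : MapsTo u univ (Ici h) := fun x _ => hu_ge x
  have hu_cont : ContinuousAt u 0 := by
    rw [← continuousWithinAt_univ]
    exact hψc.comp_of_eq continuous_abs.continuousWithinAt (fun x _ => abs_nonneg x) abs_zero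
  have hfu : Tendsto (fun x => f (u x)) (𝓝 0) (𝓝 0) := by
    have := hfc.comp_of_eq hu_cont.continuousWithinAt hu_mem hu0
    rwa [continuousWithinAt_univ, ContinuousAt, Function.comp_apply, hu0, hfh] at this
  have hv_cont : ContinuousAt v 0 := by
    rw [ContinuousAt, hv0]
    exact squeeze_zero_norm (fun x => (hv_abs x).le) (by simpa using hfu.norm)
  have hku_cont : ContinuousAt (fun x => k (u x)) 0 := by
    rw [← continuousWithinAt_univ]
    exact hkc.comp_of_eq hu_cont.continuousWithinAt hu_mem hu0
  exact ⟨u, v, hasDerivAt_of_hasDerivAt_of_ne' (fun x hx => (hderiv_ne x hx).1) hu_cont hv_cont,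
    hasDerivAt_of_hasDerivAt_of_ne' (fun x hx => (hderiv_ne x hx).2) hv_cont hku_cont,
    fun x => ⟨hu_ge x, sq_eq_sq_iff_abs_eq_abs _ _ |>.2 (hv_abs x)⟩, hu0, hv0⟩

theorem integrableOn_Ioc_inv_of_sqrt_mul_sub_le {f : ℝ → ℝ} {c h b : ℝ} (hc : 0 < c)
    (hf : ContinuousOn f (Ioc h b)) (hle : ∀ t ∈ Ioc h b, √(c * (t - h)) ≤ f t) :
    IntegrableOn (fun t => (f t)⁻¹) (Ioc h b) := by
  have hpos : ∀ t ∈ Ioc h b, 0 < √(c * (t - h)) := fun t ht =>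
    Real.sqrt_pos.2 (mul_pos hc (sub_pos.2 ht.1))
  have hdom : IntegrableOn (fun t => (√c)⁻¹ * (t - h) ^ (-(1 / 2) : ℝ)) (Ioc h b) := by
    have := (intervalIntegral.intervalIntegrable_rpow' (a := 0) (b := b - h)
      (r := -(1 / 2)) (by norm_num)).comp_sub_right h
    simp only [zero_add, sub_add_cancel] at this
    exact ((intervalIntegrable_iff.1 this).mono_set Ioc_subset_uIoc).const_mul _
  have hf_pos : ∀ t ∈ Ioc h b, 0 < f t := fun t ht => (hpos t ht).trans_le (hle t ht)
  refine hdom.mono'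
    ((hf.inv₀ fun t ht => (hf_pos t ht).ne').aestronglyMeasurable measurableSet_Ioc)
    ((ae_restrict_iff' measurableSet_Ioc).2 (Eventually.of_forall fun t ht => ?_))
  rw [norm_inv, Real.norm_of_nonneg (hf_pos t ht).le]
  calc (f t)⁻¹ ≤ (√(c * (t - h)))⁻¹ := inv_anti₀ (hpos t ht) (hle t ht)
    _ = (√c)⁻¹ * (t - h) ^ (-(1 / 2) : ℝ) := by
      rw [Real.sqrt_mul hc.le, mul_inv, Real.sqrt_eq_rpow (t - h),
        ← Real.rpow_neg (sub_nonneg.2 ht.1.le)]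

noncomputable def speed (φ : ℝ → ℝ) (h y : ℝ) : ℝ := √(exp (2 * (φ y - φ h)) - 1)

section Speed

variable {φ : ℝ → ℝ} {h y : ℝ}

@[simp]
theorem speed_self : speed φ h h = 0 := by simp [speed]

theorem speed_pos (hy : φ h < φ y) : 0 < speed φ h y :=
  Real.sqrt_pos.2 <| by linarith [add_one_lt_exp (x := 2 * (φ y - φ h)) (by linarith)]

theorem sq_speed (hy : φ h ≤ φ y) : speed φ h y ^ 2 = exp (2 * (φ y - φ h)) - 1 :=
  Real.sq_sqrt <| by linarith [add_one_le_exp (2 * (φ y - φ h))]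

theorem sqrt_two_mul_sub_le_speed : √(2 * (φ y - φ h)) ≤ speed φ h y :=
  Real.sqrt_le_sqrt <| by linarith [add_one_le_exp (2 * (φ y - φ h))]

theorem exp_neg_le_mul_inv_speed (hy : φ h < φ y) :
    exp (-φ y) ≤ exp (-φ h) * (speed φ h y)⁻¹ := by
  have hle : speed φ h y ≤ exp (φ y - φ h) := by
    rw [speed, Real.sqrt_le_left (exp_pos _).le, ← exp_nat_mul]
    push_cast
    linarith
  calc exp (-φ y) = exp (-φ h) * (exp (φ y - φ h))⁻¹ := by
        rw [← exp_neg, ← exp_add]; ring_nf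
    _ ≤ exp (-φ h) * (speed φ h y)⁻¹ := by
      gcongr
      exact speed_pos hy

theorem continuousAt_speed (hφ : ContinuousAt φ y) : ContinuousAt (speed φ h) y := by
  unfold speed; fun_prop

theorem hasDerivAt_speed {φ' : ℝ} (hφ : HasDerivAt φ φ' y) (hy : φ h < φ y) :
    HasDerivAt (speed φ h) (φ' * (1 + speed φ h y ^ 2) / speed φ h y) y := by
  have hE : exp (2 * (φ y - φ h)) - 1 ≠ 0 := by
    rw [← sq_speed hy.le]; exact (pow_pos (speed_pos hy) 2).ne'
  refine ((((hφ.sub_const (φ h)).const_mul 2).exp.sub_const 1).sqrt hE).congr_deriv ?_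
  rw [sq_speed hy.le, speed]
  field_simp
  ring

end Speed

section Potential

variable {φ φ' : ℝ → ℝ} {a h : ℝ}

theorem integrableOn_Ioc_inv_speed (ha : a < h) (hφ : ∀ s ∈ Ioi a, HasDerivAt φ (φ' s) s)
    (hφc : ContinuousOn φ' (Ioi a)) (hφpos : ∀ s ∈ Ioi a, 0 < φ' s) (b : ℝ) :
    IntegrableOn (fun y => (speed φ h y)⁻¹) (Ioc h b) := by
  rcases le_or_gt b h with hb | hb
  · simp [Ioc_eq_empty_of_le hb]
  have hsub : Icc h b ⊆ Ioi a := fun t ht => ha.trans_le ht.1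
  obtain ⟨s, hs, hmin⟩ := isCompact_Icc.exists_isMinOn (nonempty_Icc.2 hb.le) (hφc.mono hsub)
  have hlin : ∀ t ∈ Icc h b, φ' s * (t - h) ≤ φ t - φ h := by
    refine fun t ht => (convex_Icc h b).mul_sub_le_image_sub_of_le_deriv
      (fun t ht => (hφ t (hsub ht)).continuousAt.continuousWithinAt)
      (fun t ht => (hφ t (hsub (interior_subset ht))).differentiableAt.differentiableWithinAt)
      (fun t ht => ?_) h (left_mem_Icc.2 hb.le) t ht ht.1
    rw [(hφ t (hsub (interior_subset ht))).deriv]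
    exact hmin (interior_subset ht)
  refine integrableOn_Ioc_inv_of_sqrt_mul_sub_le (c := 2 * φ' s)
    (by linarith [hφpos s (hsub hs)])
    (fun t ht => (continuousAt_speed (hφ t (ha.trans ht.1)).continuousAt).continuousWithinAt)
    (fun t ht => ?_)
  calc √(2 * φ' s * (t - h)) ≤ √(2 * (φ t - φ h)) := by
        rw [mul_assoc]; gcongr; exact hlin t (Ioc_subset_Icc_self ht)
    _ ≤ speed φ h t := sqrt_two_mul_sub_le_speed

theorem not_integrableOn_Ioi_inv_speed (hφ : ContinuousOn φ (Ioi h))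
    (hmono : ∀ y ∈ Ioi h, φ h < φ y)
    (hnint : ¬ IntegrableOn (fun y => exp (-φ y)) (Ioi h)) :
    ¬ IntegrableOn (fun y => (speed φ h y)⁻¹) (Ioi h) := fun hint =>
  hnint <| (hint.const_mul (exp (-φ h))).mono'
    (hφ.neg.rexp.aestronglyMeasurable measurableSet_Ioi) <|
    (ae_restrict_iff' measurableSet_Ioi).2 <| Eventually.of_forall fun y hy => by
      rw [Real.norm_of_nonneg (exp_pos _).le]
      exact exp_neg_le_mul_inv_speed (hmono y hy)

end Potential

theorem stmt17_general (a h : ℝ) (ha : a < h)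
    (φ φ' : ℝ → ℝ)
    (hφ : ∀ s ∈ Ioi a, HasDerivAt φ (φ' s) s)
    (hφc : ContinuousOn φ' (Ioi a))
    (hφpos : ∀ s ∈ Ioi a, 0 < φ' s)
    (hnint : ¬ MeasureTheory.IntegrableOn (fun t => Real.exp (-φ t)) (Ioi h)) :
    ∃ u u' : ℝ → ℝ,
      (∀ x, HasDerivAt u (u' x) x) ∧
      (∀ x, HasDerivAt u' (φ' (u x) * (1 + u' x ^ 2)) x) ∧
      (∀ x, u x ∈ Ioi a) ∧ u 0 = h ∧ u' 0 = 0 := by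
  have hIoi : ∀ y ∈ Ioi h, y ∈ Ioi a := fun y hy => ha.trans hy
  have hφcont : ContinuousOn φ (Ioi a) := fun y hy => (hφ y hy).continuousAt.continuousWithinAt
  have hmono : ∀ y ∈ Ioi h, φ h < φ y := fun y hy =>
    strictMonoOn_of_deriv_pos (convex_Ioi a) hφcont
      (fun t ht => by rw [interior_Ioi] at ht; rw [(hφ t ht).deriv]; exact hφpos t ht)
      ha (hIoi y hy) hy
  have hspeed : ContinuousAt (speed φ h) h := continuousAt_speed (hφ h ha).continuousAt
  have hk : ContinuousAt (fun y => φ' y * (1 + speed φ h y ^ 2)) h :=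
    (hφc.continuousAt (Ioi_mem_nhds ha)).mul (continuousAt_const.add (hspeed.pow 2))
  obtain ⟨ψ, hψ0, hψc, hψ⟩ := exists_solution_of_not_integrableOn_inv
    (fun y hy => (continuousAt_speed (hφ y (hIoi y hy)).continuousAt).continuousWithinAt)
    (fun y hy => speed_pos (hmono y hy)) (integrableOn_Ioc_inv_speed ha hφ hφc hφpos)
    (not_integrableOn_Ioi_inv_speed (hφcont.mono fun y => hIoi y) hmono hnint)
  obtain ⟨u, v, hu, hv, huv, hu0, hv0⟩ := exists_even_solution
    (k := fun y => φ' y * (1 + speed φ h y ^ 2)) hψ0 hψc hψ speed_self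
    hspeed.continuousWithinAt (fun y hy => hasDerivAt_speed (hφ y (hIoi y hy)) (hmono y hy))
    (fun y hy => mul_div_cancel₀ _ (speed_pos (hmono y hy)).ne') hk.continuousWithinAt
  refine ⟨u, v, hu, fun x => ?_, fun x => ha.trans_le (huv x).1, hu0, hv0⟩
  rw [(huv x).2]
  exact hv x

/-- Global existence: for `φ` C¹, strictly increasing, unbounded above, with
`φ' ≤ M` on `(h,∞)` and `e^{−φ}` not integrable on `(h,∞)`, the maximal
solution of `u'' = φ'(u)(1+(u')²)`, `u 0 = h`, `u' 0 = 0` is defined on all of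
`ℝ`, i.e. `Λ_h = ∞`. -/
theorem stmt17 (a h M : ℝ) (ha : a < h)
    (φ φ' : ℝ → ℝ)
    (hφ : ∀ s ∈ Ioi a, HasDerivAt φ (φ' s) s)
    (hφc : ContinuousOn φ' (Ioi a))
    (hφpos : ∀ s ∈ Ioi a, 0 < φ' s)
    (htop : Tendsto φ atTop atTop)
    (hM : ∀ s ∈ Ioi h, φ' s ≤ M)
    (hnint : ¬ MeasureTheory.IntegrableOn (fun t => Real.exp (-φ t)) (Ioi h)) :
    ∃ u u' : ℝ → ℝ,
      (∀ x, HasDerivAt u (u' x) x) ∧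
      (∀ x, HasDerivAt u' (φ' (u x) * (1 + u' x ^ 2)) x) ∧
      (∀ x, u x ∈ Ioi a) ∧ u 0 = h ∧ u' 0 = 0 :=
  stmt17_general a h ha φ φ' hφ hφc hφpos hnint
end
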